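/- arXiv:1809.05586 — 4 statements merged into one kernel-verified Lean document; each statement's English description precedes it below -/
import Mathlib

section
/- Let F ⊂ ℤ be a finite union of intervals of length n, and let a be the number of integers s with s+[0,n) ⊆ F. If u ∈ A^F satisfies |W_n(u)| = j < a, where W_n(u) is the set of distinct length-n subwords of u occurring on intervals contained in F, then for any repeat cover R of u, the repeat area A(R) = ∪_{(I₁,I₂)∈R} I₂ satisfies |A(R)| ≥ a + n − j − 1. -/
/-- Let `F ⊂ ℤ` be a finite union of intervals of length `n`, let `S` be the set
of positions `s` with `s + [0,n) ⊆ F` and `a = |S|`.  Suppose the pattern `u` (a coloring of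
`ℤ`, only its values on `F` matter) has exactly `j = |W_n(u)|` distinct length-`n` subwords on
intervals contained in `F`, with `j < a`.  An `n`-repeat is a pair `(s,t)` of positions in `S`
with the same word, `s` the (lexicographically) minimal occurrence of that word, and `s ≠ t`.
A repeat cover `R` is a set of repeats such that the interval of the second coordinate of every
repeat is contained in the repeat area `A(R) = ⋃_{(s,t) ∈ R} [t, t+n)`.  Then
`|A(R)| ≥ a + n − j − 1`, stated subtraction-free as `a + n ≤ |A(R)| + j + 1`. -/
theorem stmt3 {A : Type*} [DecidableEq A] (n : ℕ) (hn : 1 ≤ n) (F : Finset ℤ)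
    (hF : ∃ T : Finset ℤ, F = T.biUnion fun s => Finset.Ico s (s + (n : ℤ)))
    (u : ℤ → A)
    (S : Finset ℤ) (hS : ∀ s : ℤ, s ∈ S ↔ Finset.Ico s (s + (n : ℤ)) ⊆ F)
    (a j : ℕ) (ha : a = S.card)
    (W : Finset (Fin n → A)) (hW : W = S.image fun s => fun i : Fin n => u (s + (i : ℕ)))
    (hj : j = W.card) (hja : j < a)
    (R : Finset (ℤ × ℤ))
    (hRrep : ∀ p ∈ R, p.1 ∈ S ∧ p.2 ∈ S ∧ (∀ i : Fin n, u (p.1 + (i : ℕ)) = u (p.2 + (i : ℕ))) ∧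
      (∀ s' ∈ S, (∀ i : Fin n, u (s' + (i : ℕ)) = u (p.1 + (i : ℕ))) → p.1 ≤ s') ∧ p.1 ≠ p.2)
    (hRcov : ∀ s t : ℤ, s ∈ S → t ∈ S → (∀ i : Fin n, u (s + (i : ℕ)) = u (t + (i : ℕ))) →
      (∀ s' ∈ S, (∀ i : Fin n, u (s' + (i : ℕ)) = u (s + (i : ℕ))) → s ≤ s') → s ≠ t →
      Finset.Ico t (t + (n : ℤ)) ⊆ R.biUnion fun p => Finset.Ico p.2 (p.2 + (n : ℤ))) :
    a + n ≤ (R.biUnion fun p => Finset.Ico p.2 (p.2 + (n : ℤ))).card + j + 1 := by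
  classical
  set AR := R.biUnion fun p => Finset.Ico p.2 (p.2 + (n : ℤ)) with hAR
  let w : ℤ → (Fin n → A) := fun s i => u (s + (i : ℕ))
  set M : Finset ℤ := S.filter (fun s => ∀ s' ∈ S, w s' = w s → s ≤ s') with hM
  have hMS : M ⊆ S := Finset.filter_subset _ _
  have himg : M.image w = W := by
    rw [hW]
    apply Finset.Subset.antisymm
    · exact Finset.image_subset_image hMS
    · intro x hx
      obtain ⟨t, htS, hxt⟩ := Finset.mem_image.mp hx
      have hne : (S.filter (fun s => w s = w t)).Nonempty := ⟨t, by simp [htS]⟩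
      set s0 := (S.filter (fun s => w s = w t)).min' hne with hs0
      have hs0mem := (S.filter (fun s => w s = w t)).min'_mem hne
      rw [Finset.mem_filter] at hs0mem
      refine Finset.mem_image.mpr ⟨s0, ?_, ?_⟩
      · rw [hM, Finset.mem_filter]
        refine ⟨hs0mem.1, fun s' hs' hws' => ?_⟩
        exact Finset.min'_le _ _ (Finset.mem_filter.mpr ⟨hs', by rw [hws', hs0mem.2]⟩)
      · rw [hs0mem.2]; exact hxt
  have hinj : Set.InjOn w M := by
    intro s1 h1 s2 h2 heq
    simp only [hM, Finset.mem_coe, Finset.mem_filter] at h1 h2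
    exact le_antisymm (h1.2 s2 h2.1 heq.symm) (h2.2 s1 h1.1 heq)
  have hMcard : M.card = j := by
    rw [hj, ← himg, Finset.card_image_of_injOn hinj]
  set D : Finset ℤ := S \ M with hD
  have hDcard : D.card = a - j := by
    rw [hD, Finset.card_sdiff_of_subset hMS, ← ha, hMcard]
  have hDne : D.Nonempty := by
    rw [← Finset.card_pos, hDcard]; omega
  have hDsub : ∀ t ∈ D, Finset.Ico t (t + (n : ℤ)) ⊆ AR := by
    intro t ht
    rw [hD, Finset.mem_sdiff] at ht
    have hne : (S.filter (fun s => w s = w t)).Nonempty := ⟨t, by simp [ht.1]⟩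
    set s0 := (S.filter (fun s => w s = w t)).min' hne with hs0
    have hs0mem := (S.filter (fun s => w s = w t)).min'_mem hne
    rw [Finset.mem_filter] at hs0mem
    have hs0min : ∀ s' ∈ S, w s' = w s0 → s0 ≤ s' := by
      intro s' hs' hws'
      exact Finset.min'_le _ _ (Finset.mem_filter.mpr ⟨hs', by rw [hws', hs0mem.2]⟩)
    have hs0M : s0 ∈ M := by
      rw [hM, Finset.mem_filter]; exact ⟨hs0mem.1, hs0min⟩
    have hst : s0 ≠ t := fun h => ht.2 (h ▸ hs0M)
    exact hRcov s0 t hs0mem.1 ht.1 (fun i => congrFun hs0mem.2 i)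
      (fun s' hs' h => hs0min s' hs' (funext h)) hst
  have hDAR : D ⊆ AR := fun t ht =>
    hDsub t ht (Finset.mem_Ico.mpr ⟨le_refl t, by omega⟩)
  set m := D.max' hDne with hm
  have hmD : m ∈ D := D.max'_mem hDne
  have htail : Finset.Ico (m + 1) (m + (n : ℤ)) ⊆ AR := fun x hx => by
    refine hDsub m hmD (Finset.mem_Ico.mpr ?_)
    rw [Finset.mem_Ico] at hx; omega
  have hdisj : Disjoint D (Finset.Ico (m + 1) (m + (n : ℤ))) := by
    rw [Finset.disjoint_left]
    intro x hxD hxI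
    rw [Finset.mem_Ico] at hxI
    have := D.le_max' x hxD
    omega
  have hunion : D ∪ Finset.Ico (m + 1) (m + (n : ℤ)) ⊆ AR :=
    Finset.union_subset hDAR htail
  have hcard := Finset.card_le_card hunion
  rw [Finset.card_union_of_disjoint hdisj, hDcard] at hcard
  have hIcard : (Finset.Ico (m + 1) (m + (n : ℤ))).card = n - 1 := by
    rw [Int.card_Ico]; omega
  rw [hIcard] at hcard
  omega
end

section
/- Let X be a mixing SFT, f : X → ℝ Hölder continuous with Gibbs measure μ, H a finite union of cylinder sets in X, and Y = X \ ∪_{m∈ℤ} σ^{−m}(H) the survivor set. Then the escape rate exists and satisfies ϱ(μ : H) := lim_m (1/m) log μ({x ∈ X : σ^k(x) ∉ H for 0 ≤ k < m}) = P_Y(f) − P_X(f). -/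
open MeasureTheory Filter Topology
open scoped ENNReal

noncomputable section

variable {A : Type*}

/-- The Birkhoff sum `∑_{j<m} f(σ^j x)` for the left shift `σ` on `ℤ → A`. -/
def Birk (f : (ℤ → A) → ℝ) (m : ℕ) (x : ℤ → A) : ℝ :=
  ∑ j ∈ Finset.range m, f fun i => x (i + (j : ℤ))

/-- `S_m f(w) = sup_{x ∈ Y ∩ [w]} ∑_{j<m} f(σ^j x)`. -/
def Ssup (Y : Set (ℤ → A)) (f : (ℤ → A) → ℝ) (m : ℕ) (w : Fin m → A) : ℝ :=
  sSup {r : ℝ | ∃ x ∈ Y, (∀ i : Fin m, x ((i : ℕ) : ℤ) = w i) ∧ r = Birk f m x}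

open scoped Classical in
/-- `B_m(Y)`, the set of words of length `m` appearing in `Y`. -/
def Words [Fintype A] (Y : Set (ℤ → A)) (m : ℕ) : Finset (Fin m → A) :=
  Finset.univ.filter fun w => ∃ x ∈ Y, ∀ i : Fin m, x ((i : ℕ) : ℤ) = w i

/-- The partition function `Λ_m(Y) = ∑_{w ∈ B_m(Y)} e^{S_m f(w)}`. -/
def Lam [Fintype A] (Y : Set (ℤ → A)) (f : (ℤ → A) → ℝ) (m : ℕ) : ℝ :=
  ∑ w ∈ Words Y m, Real.exp (Ssup Y f m w)

/-- A subshift: a closed, shift-invariant subset of `A^ℤ`. -/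
def IsSubshift [TopologicalSpace A] (X : Set (ℤ → A)) : Prop :=
  IsClosed X ∧ (fun x : ℤ → A => fun i => x (i + 1)) '' X = X

/-- A subshift of finite type: the points avoiding a (finite) set of words of length `m`. -/
def IsSFT (X : Set (ℤ → A)) : Prop :=
  ∃ (m : ℕ) (Fo : Set (Fin m → A)),
    X = {x | ∀ t : ℤ, (fun i : Fin m => x (t + (i : ℕ))) ∉ Fo}

/-- Topological mixing for a subshift, in the form used in the paper. -/
def IsMixingSubshift (X : Set (ℤ → A)) : Prop :=
  ∃ N : ℕ, ∀ x ∈ X, ∀ y ∈ X, ∃ z ∈ X,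
    (∀ i : ℤ, i ≤ 0 → z i = x i) ∧ ∀ i : ℤ, (N : ℤ) ≤ i → z i = y i

/-- Hölder continuity of `f` w.r.t. the metric `d(x,y) = 2^{-n(x,y)}` on `A^ℤ`. -/
def HolderPotential (f : (ℤ → A) → ℝ) : Prop :=
  ∃ C θ : ℝ, 0 < θ ∧ θ < 1 ∧
    ∀ (n : ℕ) (x y : ℤ → A), (∀ i : ℤ, |i| ≤ (n : ℤ) → x i = y i) → |f x - f y| ≤ C * θ ^ n

/-- Extended-real logarithm, with `elog x = ⊥` for `x ≤ 0` (so that `P_∅(f) = -∞`). -/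
def elog (x : ℝ) : EReal := if x ≤ 0 then ⊥ else ((Real.log x : ℝ) : EReal)

/-- The length-`n` subword of `u` at offset `j`. -/
def subw {k : ℕ} (n : ℕ) (u : Fin k → A) (j : ℕ) (hj : j + n ≤ k) : Fin n → A :=
  fun i => u ⟨j + (i : ℕ), lt_of_lt_of_le (Nat.add_lt_add_left i.isLt j) hj⟩

/-- Shift by `t`. -/
def Sh (t : ℤ) (x : ℤ → A) : ℤ → A := fun i => x (i + t)

lemma sh_sh (a b : ℤ) (x : ℤ → A) : Sh a (Sh b x) = Sh (a + b) x := by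
  funext i; simp [Sh, add_assoc]

lemma birk_def (f : (ℤ → A) → ℝ) (m : ℕ) (x : ℤ → A) :
    Birk f m x = ∑ j ∈ Finset.range m, f (Sh j x) := rfl

lemma birk_add (f : (ℤ → A) → ℝ) (a b : ℕ) (x : ℤ → A) :
    Birk f (a + b) x = Birk f a x + Birk f b (Sh a x) := by
  rw [birk_def, Finset.sum_range_add, birk_def, birk_def]
  congr 1
  refine Finset.sum_congr rfl fun j _ => ?_
  rw [sh_sh]; congr 1; push_cast; ring

lemma birk_abs_le (f : (ℤ → A) → ℝ) (B : ℝ) (hB : ∀ x, |f x| ≤ B) (m : ℕ) (x : ℤ → A) :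
    |Birk f m x| ≤ m * B := by
  calc |Birk f m x| ≤ ∑ j ∈ Finset.range m, |f (Sh j x)| := by
        rw [birk_def]; exact Finset.abs_sum_le_sum_abs _ _
    _ ≤ ∑ _j ∈ Finset.range m, B := Finset.sum_le_sum fun j _ => hB _
    _ = m * B := by simp [mul_comm]

lemma mem_words_iff [Fintype A] {Y : Set (ℤ → A)} {m : ℕ} {w : Fin m → A} :
    w ∈ Words Y m ↔ ∃ x ∈ Y, ∀ i : Fin m, x ((i : ℕ) : ℤ) = w i := by
  classical
  simp [Words]

lemma bddAbove_birkSet (Y : Set (ℤ → A)) (f : (ℤ → A) → ℝ) (B : ℝ) (hB : ∀ x, |f x| ≤ B)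
    (m : ℕ) (w : Fin m → A) :
    BddAbove {r : ℝ | ∃ x ∈ Y, (∀ i : Fin m, x ((i : ℕ) : ℤ) = w i) ∧ r = Birk f m x} := by
  refine ⟨m * B, fun r hr => ?_⟩
  obtain ⟨x, -, -, rfl⟩ := hr
  exact (abs_le.1 (birk_abs_le f B hB m x)).2

lemma birk_le_Ssup (Y : Set (ℤ → A)) (f : (ℤ → A) → ℝ) (B : ℝ) (hB : ∀ x, |f x| ≤ B)
    (m : ℕ) (w : Fin m → A) {x : ℤ → A} (hx : x ∈ Y) (hw : ∀ i : Fin m, x ((i : ℕ) : ℤ) = w i) :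
    Birk f m x ≤ Ssup Y f m w :=
  le_csSup (bddAbove_birkSet Y f B hB m w) ⟨x, hx, hw, rfl⟩

lemma Ssup_le (Y : Set (ℤ → A)) (f : (ℤ → A) → ℝ) (m : ℕ) (w : Fin m → A) {c : ℝ}
    (hne : ∃ x ∈ Y, ∀ i : Fin m, x ((i : ℕ) : ℤ) = w i)
    (h : ∀ x ∈ Y, (∀ i : Fin m, x ((i : ℕ) : ℤ) = w i) → Birk f m x ≤ c) :
    Ssup Y f m w ≤ c := by
  obtain ⟨x₀, hx₀, hw₀⟩ := hne
  refine csSup_le ⟨_, ⟨x₀, hx₀, hw₀, rfl⟩⟩ ?_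
  rintro r ⟨x, hx, hw, rfl⟩
  exact h x hx hw

lemma geom_tail (θ : ℝ) (hθ0 : 0 < θ) (hθ1 : θ < 1) (m : ℕ) :
    ∑ j ∈ Finset.range m, θ ^ j ≤ 1 / (1 - θ) := by
  have h1 : (0:ℝ) < 1 - θ := by linarith
  have := geom_sum_Ico_le_of_lt_one (le_of_lt hθ0) hθ1 (m := 0) (n := m)
  simpa using this

lemma birk_dist (f : (ℤ → A) → ℝ) (C θ : ℝ) (hθ0 : 0 < θ) (hθ1 : θ < 1) (hC : 0 ≤ C)
    (hHo : ∀ (n : ℕ) (x y : ℤ → A), (∀ i : ℤ, |i| ≤ (n : ℤ) → x i = y i) → |f x - f y| ≤ C * θ ^ n)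
    (m : ℕ) (x y : ℤ → A) (hxy : ∀ i : ℤ, 0 ≤ i → i < (m : ℤ) → x i = y i) :
    |Birk f m x - Birk f m y| ≤ 2 * C / (1 - θ) := by
  have h1 : (0:ℝ) < 1 - θ := by linarith
  have key : ∀ j ∈ Finset.range m, |f (Sh j x) - f (Sh j y)| ≤ C * θ ^ j + C * θ ^ (m - 1 - j) := by
    intro j hj
    rw [Finset.mem_range] at hj
    set n : ℕ := min j (m - 1 - j) with hn
    have happ : |f (Sh j x) - f (Sh j y)| ≤ C * θ ^ n := by
      refine hHo n _ _ fun i hi => ?_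
      have h2 : -(n:ℤ) ≤ i ∧ i ≤ n := abs_le.1 hi
      have hn1 : (n:ℤ) ≤ j := by exact_mod_cast Nat.cast_le.2 (min_le_left _ _)
      have hn2 : (n:ℤ) ≤ (m:ℤ) - 1 - j := by
        have := min_le_right j (m - 1 - j)
        omega
      refine hxy (i + j) (by omega) (by omega)
    have : C * θ ^ n ≤ C * θ ^ j + C * θ ^ (m - 1 - j) := by
      rcases min_choice j (m - 1 - j) with h | h <;> rw [← hn] at *
      · rw [h]
        nlinarith [pow_pos hθ0 (m - 1 - j), pow_pos hθ0 j]
      · rw [h]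
        nlinarith [pow_pos hθ0 (m - 1 - j), pow_pos hθ0 j]
    linarith
  calc |Birk f m x - Birk f m y|
      = |∑ j ∈ Finset.range m, (f (Sh j x) - f (Sh j y))| := by
        rw [birk_def, birk_def, Finset.sum_sub_distrib]
    _ ≤ ∑ j ∈ Finset.range m, |f (Sh j x) - f (Sh j y)| := Finset.abs_sum_le_sum_abs _ _
    _ ≤ ∑ j ∈ Finset.range m, (C * θ ^ j + C * θ ^ (m - 1 - j)) := Finset.sum_le_sum key
    _ = C * (∑ j ∈ Finset.range m, θ ^ j) + C * ∑ j ∈ Finset.range m, θ ^ (m - 1 - j) := by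
        rw [Finset.sum_add_distrib, Finset.mul_sum, Finset.mul_sum]
    _ ≤ C * (1/(1-θ)) + C * (1/(1-θ)) := by
        have e1 : ∑ j ∈ Finset.range m, θ ^ (m - 1 - j) = ∑ j ∈ Finset.range m, θ ^ j := by
          rw [← Finset.sum_range_reflect]
          refine Finset.sum_congr rfl fun j hj => ?_
          rw [Finset.mem_range] at hj
          congr 1
          omega
        rw [e1]
        have := geom_tail θ hθ0 hθ1 m
        nlinarith
    _ = 2 * C / (1 - θ) := by ring


lemma emod_window (p π e t i : ℤ) (he : e = (t - p) % π) :
    (t + i - p) % π = (e + i) % π := by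
  have h3 : t + i - p = (t - p) + i := by ring
  rw [h3, Int.add_emod (t - p) i, he]
  conv_rhs => rw [Int.add_emod]
  rw [Int.emod_emod_of_dvd _ dvd_rfl]

lemma emod_shift (s π : ℤ) (hπ : 0 < π) (h1 : π ≤ s) (h2 : s < 2 * π) : s % π = s - π := by
  have h3 : s - π = s + π * (-1) := by ring
  have h4 : (s - π) % π = s % π := by rw [h3, Int.add_mul_emod_self_left]
  rw [← h4, Int.emod_eq_of_lt (by omega) (by omega)]

set_option maxHeartbeats 1000000 in
lemma pump [Fintype A]
    (X H : Set (ℤ → A)) (m₀ : ℕ) (Fo : Set (Fin m₀ → A))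
    (hXchar : X = {x : ℤ → A | ∀ t : ℤ, (fun i : Fin m₀ => x (t + (i : ℕ))) ∉ Fo})
    (nH : ℕ)
    (hHagree : ∀ x y : ℤ → A, (∀ i : Fin nH, y ((i : ℕ) : ℤ) = x ((i : ℕ) : ℤ)) → x ∈ H → y ∈ H)
    (R : ℕ) (hm₀R : m₀ ≤ R) (hnHR : nH ≤ R) (hR1 : 1 ≤ R)
    (L₀ : ℕ) (hL₀ : L₀ = R * (Fintype.card (Fin R → A) + 2))
    (m : ℕ) (x : ℤ → A) (hx : x ∈ X)
    (havoid : ∀ j : ℤ, -(L₀ : ℤ) ≤ j → j < (m : ℤ) + L₀ → Sh j x ∉ H) :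
    ∃ y : ℤ → A, y ∈ X ∧ (∀ j : ℤ, Sh j y ∉ H) ∧ ∀ i : ℤ, 0 ≤ i → i < (m : ℤ) → y i = x i := by
  classical
  set V : ℕ := Fintype.card (Fin R → A) with hV
  -- right pigeonhole
  have hcard : Fintype.card (Fin R → A) < Fintype.card (Fin (V + 1)) := by
    rw [Fintype.card_fin, hV]
    exact Nat.lt_succ_self _
  obtain ⟨s, t, hst, hg⟩ := Fintype.exists_ne_map_eq_of_card_lt
    (fun (t : Fin (V + 1)) (i : Fin R) => x ((m : ℤ) + (R : ℤ) * ((t : ℕ) : ℤ) + ((i : ℕ) : ℤ)))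
    hcard
  have hRight : ∃ a b : ℕ, a < b ∧ b ≤ V ∧
      ∀ i : ℤ, 0 ≤ i → i < (R : ℤ) →
        x ((m : ℤ) + (R : ℤ) * a + i) = x ((m : ℤ) + (R : ℤ) * b + i) := by
    have key : ∀ (u v : Fin (V + 1)),
        ((fun (t : Fin (V + 1)) (i : Fin R) => x ((m : ℤ) + (R : ℤ) * ((t : ℕ) : ℤ) + ((i : ℕ) : ℤ))) u =
         (fun (t : Fin (V + 1)) (i : Fin R) => x ((m : ℤ) + (R : ℤ) * ((t : ℕ) : ℤ) + ((i : ℕ) : ℤ))) v) →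
        ∀ i : ℤ, 0 ≤ i → i < (R : ℤ) →
          x ((m : ℤ) + (R : ℤ) * (u : ℕ) + i) = x ((m : ℤ) + (R : ℤ) * (v : ℕ) + i) := by
      intro u v huv i h0 hiR
      have := congrFun huv ⟨i.toNat, by omega⟩
      simpa [Int.toNat_of_nonneg h0] using this
    rcases hst.lt_or_gt with h | h
    · exact ⟨s, t, Fin.lt_def.mp h, by omega, key s t hg⟩
    · exact ⟨t, s, Fin.lt_def.mp h, by omega, key t s hg.symm⟩
  obtain ⟨a, b, hab, hbV, heqR⟩ := hRight
  -- left pigeonhole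
  obtain ⟨s', t', hst', hg'⟩ := Fintype.exists_ne_map_eq_of_card_lt
    (fun (t : Fin (V + 1)) (i : Fin R) => x (-(R : ℤ) * (((t : ℕ) : ℤ) + 1) + ((i : ℕ) : ℤ)))
    hcard
  have hLeft : ∃ c d : ℕ, c < d ∧ d ≤ V ∧
      ∀ i : ℤ, 0 ≤ i → i < (R : ℤ) →
        x (-(R : ℤ) * ((c : ℤ) + 1) + i) = x (-(R : ℤ) * ((d : ℤ) + 1) + i) := by
    have key : ∀ (u v : Fin (V + 1)),
        ((fun (t : Fin (V + 1)) (i : Fin R) => x (-(R : ℤ) * (((t : ℕ) : ℤ) + 1) + ((i : ℕ) : ℤ))) u =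
         (fun (t : Fin (V + 1)) (i : Fin R) => x (-(R : ℤ) * (((t : ℕ) : ℤ) + 1) + ((i : ℕ) : ℤ))) v) →
        ∀ i : ℤ, 0 ≤ i → i < (R : ℤ) →
          x (-(R : ℤ) * (((u : ℕ) : ℤ) + 1) + i) = x (-(R : ℤ) * (((v : ℕ) : ℤ) + 1) + i) := by
      intro u v huv i h0 hiR
      have := congrFun huv ⟨i.toNat, by omega⟩
      simpa [Int.toNat_of_nonneg h0] using this
    rcases hst'.lt_or_gt with h | h
    · exact ⟨s', t', Fin.lt_def.mp h, by omega, key s' t' hg'⟩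
    · exact ⟨t', s', Fin.lt_def.mp h, by omega, key t' s' hg'.symm⟩
  obtain ⟨c, d, hcd, hdV, heqL⟩ := hLeft
  clear hg hg' hst hst' hcard
  -- integer quantities
  set pR : ℤ := (m : ℤ) + (R : ℤ) * a with hpR
  set pT : ℤ := (m : ℤ) + (R : ℤ) * b with hpT
  set uS : ℤ := -(R : ℤ) * ((c : ℤ) + 1) with huS
  set uT : ℤ := -(R : ℤ) * ((d : ℤ) + 1) with huT
  set W : ℤ := (R : ℤ) * V with hW
  have hRpos : (0 : ℤ) < R := by exact_mod_cast hR1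
  have hab' : (a : ℤ) < (b : ℤ) := by exact_mod_cast hab
  have hbV' : (b : ℤ) ≤ (V : ℤ) := by exact_mod_cast hbV
  have hcd' : (c : ℤ) < (d : ℤ) := by exact_mod_cast hcd
  have hdV' : (d : ℤ) ≤ (V : ℤ) := by exact_mod_cast hdV
  -- linear facts
  have hπP : pR + (R : ℤ) ≤ pT := by
    have h1 : pT - pR = (R : ℤ) * ((b : ℤ) - a) := by rw [hpT, hpR]; ring
    nlinarith
  have hπM : uT + (R : ℤ) ≤ uS := by
    have h1 : uS - uT = (R : ℤ) * ((d : ℤ) - c) := by rw [huS, huT]; ring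
    nlinarith
  have hpRm : (m : ℤ) ≤ pR := by
    have h1 : (0:ℤ) ≤ (R : ℤ) * a := by positivity
    rw [hpR]; linarith
  have hpTW : pT ≤ (m : ℤ) + W := by
    have h1 : (R : ℤ) * b ≤ W := by rw [hW]; nlinarith
    rw [hpT]; linarith
  have huSR : uS ≤ -(R : ℤ) := by
    have h1 : (R : ℤ) * 1 ≤ (R : ℤ) * ((c : ℤ) + 1) := by nlinarith
    rw [huS]; linarith
  have huTW : -(W + (R : ℤ)) ≤ uT := by
    have h1 : (R : ℤ) * ((d : ℤ) + 1) ≤ W + R := by rw [hW]; nlinarith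
    rw [huT]; linarith
  have hL₀W : (L₀ : ℤ) = W + 2 * (R : ℤ) := by rw [hL₀, hW, hV]; push_cast; ring
  have hW0 : (0 : ℤ) ≤ W := by rw [hW]; positivity
  -- restated block equalities
  have hblockR : ∀ i : ℤ, 0 ≤ i → i < (R : ℤ) → x (pR + i) = x (pT + i) := by
    intro i h0 hiR
    rw [hpR, hpT]
    exact heqR i h0 hiR
  have hblockL : ∀ i : ℤ, 0 ≤ i → i < (R : ℤ) → x (uT + i) = x (uS + i) := by
    intro i h0 hiR
    rw [huS, huT]
    exact (heqL i h0 hiR).symm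
  clear_value pR pT uS uT W
  clear hpR hpT huS huT hW heqR heqL hab hbV hcd hdV hab' hbV' hcd' hdV' hL₀
  clear_value V
  clear hV
  set piP : ℤ := pT - pR with hpiP
  set piM : ℤ := uS - uT with hpiM
  have hπPpos : (0 : ℤ) < piP := by omega
  have hπMpos : (0 : ℤ) < piM := by omega
  have hm0 : (0 : ℤ) ≤ (m : ℤ) := by omega
  -- the pumped point
  set y : ℤ → A := fun i =>
    if i < uT then x (uT + (i - uT) % piM) else if i < pT then x i else x (pR + (i - pR) % piP)
    with hy
  have hmid : ∀ i : ℤ, uT ≤ i → i < pT → y i = x i := by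
    intro i h1 h2
    simp only [hy]
    rw [if_neg (by omega), if_pos h2]
  have hr1 : ∀ i : ℤ, pR ≤ i → y i = x (pR + (i - pR) % piP) := by
    intro i h1
    simp only [hy]
    rw [if_neg (by omega)]
    by_cases h2 : i < pT
    · rw [if_pos h2]
      rw [Int.emod_eq_of_lt (by omega) (by omega)]
      congr 1
      omega
    · rw [if_neg h2]
  have hl1 : ∀ i : ℤ, i < uS → y i = x (uT + (i - uT) % piM) := by
    intro i h1
    simp only [hy]
    by_cases h2 : i < uT
    · rw [if_pos h2]
    · rw [if_neg h2, if_pos (by omega)]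
      rw [Int.emod_eq_of_lt (by omega) (by omega)]
      congr 1
      omega
  -- window property
  have window : ∀ t : ℤ, ∃ t' : ℤ, (-(L₀ : ℤ) ≤ t' ∧ t' + (R : ℤ) ≤ (m : ℤ) + L₀) ∧
      ∀ i : ℤ, 0 ≤ i → i < (R : ℤ) → y (t + i) = x (t' + i) := by
    intro t
    by_cases hc1 : pR ≤ t
    · -- right periodic zone
      set e : ℤ := (t - pR) % piP with he
      have he0 : 0 ≤ e := Int.emod_nonneg _ (by omega)
      have heP : e < piP := Int.emod_lt_of_pos _ hπPpos
      refine ⟨pR + e, ⟨by omega, by omega⟩, ?_⟩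
      intro i h0 hiR
      have h1 : y (t + i) = x (pR + (t + i - pR) % piP) := hr1 _ (by omega)
      have h2 : (t + i - pR) % piP = (e + i) % piP := emod_window pR piP e t i he
      by_cases h4 : e + i < piP
      · rw [h1, h2, Int.emod_eq_of_lt (by omega) h4]
        congr 1
        ring
      · have h5 : (e + i) % piP = e + i - piP := emod_shift _ _ hπPpos (by omega) (by omega)
        rw [h1, h2, h5]
        calc x (pR + (e + i - piP)) = x (pT + (e + i - piP)) :=
              hblockR (e + i - piP) (by omega) (by omega)
          _ = x (pR + e + i) := by congr 1; omega
    · by_cases hc2 : t + (R : ℤ) ≤ uS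
      · -- left periodic zone
        set e : ℤ := (t - uT) % piM with he
        have he0 : 0 ≤ e := Int.emod_nonneg _ (by omega)
        have heP : e < piM := Int.emod_lt_of_pos _ hπMpos
        refine ⟨uT + e, ⟨by omega, by omega⟩, ?_⟩
        intro i h0 hiR
        have h1 : y (t + i) = x (uT + (t + i - uT) % piM) := hl1 _ (by omega)
        have h2 : (t + i - uT) % piM = (e + i) % piM := emod_window uT piM e t i he
        by_cases h4 : e + i < piM
        · rw [h1, h2, Int.emod_eq_of_lt (by omega) h4]
          congr 1
          ring
        · have h5 : (e + i) % piM = e + i - piM := emod_shift _ _ hπMpos (by omega) (by omega)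
          rw [h1, h2, h5]
          calc x (uT + (e + i - piM)) = x (uS + (e + i - piM)) :=
                hblockL (e + i - piM) (by omega) (by omega)
            _ = x (uT + e + i) := by congr 1; omega
      · -- middle zone
        refine ⟨t, ⟨by omega, by omega⟩, ?_⟩
        intro i h0 hiR
        exact hmid _ (by omega) (by omega)
  -- conclusions
  have hm₀R' : (m₀ : ℤ) ≤ (R : ℤ) := by exact_mod_cast hm₀R
  have hnHR' : (nH : ℤ) ≤ (R : ℤ) := by exact_mod_cast hnHR
  refine ⟨y, ?_, ?_, ?_⟩
  · rw [hXchar]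
    intro t
    obtain ⟨t', ⟨ht1, ht2⟩, hwin⟩ := window t
    have hx' := hx
    rw [hXchar] at hx'
    have hfun : (fun i : Fin m₀ => y (t + ((i : ℕ) : ℤ))) = fun i : Fin m₀ => x (t' + ((i : ℕ) : ℤ)) := by
      funext i
      exact hwin ((i : ℕ) : ℤ) (by positivity) (by have := i.isLt; omega)
    rw [hfun]
    exact hx' t'
  · intro j hmem
    obtain ⟨t', ⟨ht1, ht2⟩, hwin⟩ := window j
    refine havoid t' ht1 (by omega) ?_
    refine hHagree (Sh j y) (Sh t' x) ?_ hmem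
    intro i
    have : y (j + ((i : ℕ) : ℤ)) = x (t' + ((i : ℕ) : ℤ)) :=
      hwin ((i : ℕ) : ℤ) (by positivity) (by have := i.isLt; omega)
    simpa [Sh, add_comm] using this.symm
  · intro i h0 him
    exact hmid i (by omega) (by omega)

lemma cyl_congr (X : Set (ℤ → A)) (k : ℕ) (x : ℤ → A) (w : Fin k → A)
    (h : ∀ i : Fin k, x ((i : ℕ) : ℤ) = w i) :
    {y ∈ X | ∀ i : Fin k, y ((i : ℕ) : ℤ) = x ((i : ℕ) : ℤ)} =
      {y ∈ X | ∀ i : Fin k, y ((i : ℕ) : ℤ) = w i} := by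
  ext y
  simp only [Set.mem_setOf_eq]
  refine and_congr_right fun _ => forall_congr' fun i => ?_
  rw [h i]

lemma meas_cyl [MeasurableSpace A] [MeasurableSingletonClass A]
    (X : Set (ℤ → A)) (hX : MeasurableSet X) (k : ℕ) (w : Fin k → A) :
    MeasurableSet {y ∈ X | ∀ i : Fin k, y ((i : ℕ) : ℤ) = w i} := by
  have : {y ∈ X | ∀ i : Fin k, y ((i : ℕ) : ℤ) = w i} =
      X ∩ ⋂ i : Fin k, (fun y : ℤ → A => y ((i : ℕ) : ℤ)) ⁻¹' {w i} := by
    ext y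
    simp [Set.mem_iInter]
  rw [this]
  exact hX.inter (MeasurableSet.iInter fun i =>
    (measurable_pi_apply _) (measurableSet_singleton _))

lemma meas_word_set [MeasurableSpace A] [MeasurableSingletonClass A] [Finite A]
    {n : ℕ} (s : Set (Fin n → A)) : MeasurableSet s := by
  have hcs : s.Countable := s.to_countable
  have h1 : s = ⋃ v ∈ s, {v} := by simp
  rw [h1]
  refine MeasurableSet.biUnion hcs fun v _ => ?_
  have h2 : ({v} : Set (Fin n → A)) = ⋂ i : Fin n, (fun u : Fin n → A => u i) ⁻¹' {v i} := by
    ext u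
    simp [funext_iff]
  rw [h2]
  exact MeasurableSet.iInter fun i => (measurable_pi_apply _) (measurableSet_singleton _)

lemma meas_SFT [MeasurableSpace A] [MeasurableSingletonClass A] [Finite A]
    (X : Set (ℤ → A)) (m₀ : ℕ) (Fo : Set (Fin m₀ → A))
    (hXchar : X = {x : ℤ → A | ∀ t : ℤ, (fun i : Fin m₀ => x (t + (i : ℕ))) ∉ Fo}) :
    MeasurableSet X := by
  rw [hXchar]
  have : {x : ℤ → A | ∀ t : ℤ, (fun i : Fin m₀ => x (t + (i : ℕ))) ∉ Fo} =
      ⋂ t : ℤ, (fun x : ℤ → A => fun i : Fin m₀ => x (t + (i : ℕ))) ⁻¹' Foᶜ := by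
    ext x
    simp [Set.mem_iInter]
  rw [this]
  refine MeasurableSet.iInter fun t => ?_
  exact (measurable_pi_lambda _ fun i => measurable_pi_apply _) (meas_word_set Fo).compl

lemma escape_lower [Fintype A] [MeasurableSpace A] [MeasurableSingletonClass A]
    (X H Y : Set (ℤ → A)) (f : (ℤ → A) → ℝ) (μ : Measure (ℤ → A)) [IsProbabilityMeasure μ]
    (K PX B : ℝ) (hK0 : 0 < K) (hB : ∀ x, |f x| ≤ B) (nH : ℕ) (hnH : 1 ≤ nH)
    (hGL : ∀ x ∈ X, ∀ m : ℕ, 1 ≤ m →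
      K⁻¹ * Real.exp (-PX * m + Birk f m x) ≤
        (μ {y ∈ X | ∀ i : Fin m, y ((i : ℕ) : ℤ) = x ((i : ℕ) : ℤ)}).toReal)
    (hYX : Y ⊆ X)
    (hHY : ∀ x ∈ Y, ∀ j : ℤ, Sh j x ∉ H)
    (hHagree : ∀ x y : ℤ → A, (∀ i : Fin nH, y ((i : ℕ) : ℤ) = x ((i : ℕ) : ℤ)) → x ∈ H → y ∈ H)
    (hXmeas : MeasurableSet X)
    (n : ℕ) (hn : 1 ≤ n) (k : ℕ) (hk : k + 1 = n + nH) :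
    K⁻¹ * Real.exp (-PX * k) * Lam Y f k ≤
      (μ {x ∈ X | ∀ j : ℕ, j < n → Sh j x ∉ H}).toReal := by
  classical
  have hk1 : 1 ≤ k := by omega
  set Sn := {x ∈ X | ∀ j : ℕ, j < n → Sh j x ∉ H} with hSn
  set E : (Fin k → A) → Set (ℤ → A) := fun w => {y ∈ X | ∀ i : Fin k, y ((i : ℕ) : ℤ) = w i}
    with hE
  -- the union of the cylinders is inside Sn
  have hsub : (⋃ w ∈ Words Y k, E w) ⊆ Sn := by
    intro y hy
    rw [Set.mem_iUnion₂] at hy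
    obtain ⟨w, hw, hyE⟩ := hy
    rw [mem_words_iff] at hw
    obtain ⟨xw, hxwY, hxww⟩ := hw
    refine ⟨hyE.1, fun j hj hmem => ?_⟩
    refine hHY xw hxwY j ?_
    refine hHagree (Sh (j : ℤ) y) (Sh (j : ℤ) xw) ?_ hmem
    intro i
    have hik : (i : ℕ) + j < k := by have := i.isLt; omega
    have e1 : xw (((j + i : ℕ) : ℕ) : ℤ) = w ⟨j + i, by omega⟩ := hxww ⟨j + i, by omega⟩
    have e2 : y (((j + i : ℕ) : ℕ) : ℤ) = w ⟨j + i, by omega⟩ := hyE.2 ⟨j + i, by omega⟩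
    have ecast : (((j + i : ℕ) : ℕ) : ℤ) = ((i : ℕ) : ℤ) + (j : ℤ) := by push_cast; ring
    simp only [Sh]
    rw [← ecast, e1, e2]
  -- pairwise disjointness
  have hdisj : (↑(Words Y k) : Set (Fin k → A)).PairwiseDisjoint E := by
    intro w _ w' _ hne
    refine Set.disjoint_left.2 fun y hy hy' => hne ?_
    funext i
    rw [← hy.2 i, ← hy'.2 i]
  have hmeasE : ∀ w ∈ Words Y k, MeasurableSet (E w) := fun w _ => meas_cyl X hXmeas k w
  have hunion : μ (⋃ w ∈ Words Y k, E w) = ∑ w ∈ Words Y k, μ (E w) :=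
    measure_biUnion_finset hdisj hmeasE
  -- per-cylinder lower bound
  have hper : ∀ w ∈ Words Y k,
      K⁻¹ * Real.exp (-PX * k + Ssup Y f k w) ≤ (μ (E w)).toReal := by
    intro w hw
    rw [mem_words_iff] at hw
    obtain ⟨xw, hxwY, hxww⟩ := hw
    set T := (μ (E w)).toReal with hT
    have hTx : ∀ x ∈ Y, (∀ i : Fin k, x ((i : ℕ) : ℤ) = w i) →
        K⁻¹ * Real.exp (-PX * k + Birk f k x) ≤ T := by
      intro x hxY hxw
      have := hGL x (hYX hxY) k hk1
      rwa [cyl_congr X k x w hxw] at this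
    have hTpos : 0 < T :=
      lt_of_lt_of_le (by positivity) (hTx xw hxwY hxww)
    have hS : Ssup Y f k w ≤ PX * k + Real.log (K * T) := by
      refine Ssup_le Y f k w ⟨xw, hxwY, hxww⟩ fun x hxY hxw => ?_
      have h1 := hTx x hxY hxw
      have h2 : Real.exp (-PX * k + Birk f k x) ≤ K * T := by
        rw [inv_mul_le_iff₀ hK0] at h1
        linarith [h1]
      have h3 := Real.log_le_log (by positivity) h2
      rw [Real.log_exp] at h3
      linarith
    have h4 : Real.exp (-PX * k + Ssup Y f k w) ≤ K * T := by
      have h5 : -PX * k + Ssup Y f k w ≤ Real.log (K * T) := by linarith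
      calc Real.exp (-PX * k + Ssup Y f k w) ≤ Real.exp (Real.log (K * T)) :=
            Real.exp_le_exp.2 h5
        _ = K * T := Real.exp_log (by positivity)
    calc K⁻¹ * Real.exp (-PX * k + Ssup Y f k w) ≤ K⁻¹ * (K * T) := by
          apply mul_le_mul_of_nonneg_left h4 (by positivity)
      _ = T := by field_simp
  -- summation
  have hsum : ∑ w ∈ Words Y k, K⁻¹ * Real.exp (-PX * k + Ssup Y f k w) ≤
      (μ Sn).toReal := by
    calc ∑ w ∈ Words Y k, K⁻¹ * Real.exp (-PX * k + Ssup Y f k w)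
        ≤ ∑ w ∈ Words Y k, (μ (E w)).toReal := Finset.sum_le_sum hper
      _ = (∑ w ∈ Words Y k, μ (E w)).toReal :=
          (ENNReal.toReal_sum fun w _ => measure_ne_top μ _).symm
      _ = (μ (⋃ w ∈ Words Y k, E w)).toReal := by rw [hunion]
      _ ≤ (μ Sn).toReal :=
          ENNReal.toReal_mono (measure_ne_top μ _) (measure_mono hsub)
  calc K⁻¹ * Real.exp (-PX * k) * Lam Y f k
      = ∑ w ∈ Words Y k, K⁻¹ * Real.exp (-PX * k + Ssup Y f k w) := by
        rw [Lam, Finset.mul_sum]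
        refine Finset.sum_congr rfl fun w _ => ?_
        rw [Real.exp_add]
        ring
    _ ≤ (μ Sn).toReal := hsum


lemma sum_le_of_inj {α β : Type*} [DecidableEq β] (s : Finset α) (t : Finset β)
    (φ : α → β) (hinj : ∀ u ∈ s, ∀ v ∈ s, φ u = φ v → u = v)
    (hmap : ∀ u ∈ s, φ u ∈ t)
    (g : β → ℝ) (hg : ∀ b ∈ t, 0 ≤ g b) :
    ∑ u ∈ s, g (φ u) ≤ ∑ b ∈ t, g b := by
  rw [← Finset.sum_image hinj]
  refine Finset.sum_le_sum_of_subset_of_nonneg ?_ fun b hb _ => hg b hb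
  intro b hb
  rw [Finset.mem_image] at hb
  obtain ⟨u, hu, rfl⟩ := hb
  exact hmap u hu

set_option maxHeartbeats 4000000 in
lemma escape_upper [Fintype A]
    (X H Y : Set (ℤ → A)) (f : (ℤ → A) → ℝ) {_m : MeasurableSpace (ℤ → A)}
    (μ : Measure (ℤ → A)) [IsProbabilityMeasure μ]
    (K PX B D : ℝ) (hK0 : 0 ≤ K) (L₀ : ℕ)
    (hGU : ∀ x ∈ X, ∀ m : ℕ, 1 ≤ m →
      (μ {y ∈ X | ∀ i : Fin m, y ((i : ℕ) : ℤ) = x ((i : ℕ) : ℤ)}).toReal ≤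
        K * Real.exp (-PX * m + Birk f m x))
    (hB : ∀ x, |f x| ≤ B)
    (hdist : ∀ (m : ℕ) (x y : ℤ → A), (∀ i : ℤ, 0 ≤ i → i < (m : ℤ) → x i = y i) →
      |Birk f m x - Birk f m y| ≤ D)
    (hXsh : ∀ (t : ℤ), ∀ x ∈ X, Sh t x ∈ X)
    (hpump : ∀ (m : ℕ) (x : ℤ → A), x ∈ X →
      (∀ j : ℤ, -(L₀ : ℤ) ≤ j → j < (m : ℤ) + L₀ → Sh j x ∉ H) →
      ∃ y ∈ Y, ∀ i : ℤ, 0 ≤ i → i < (m : ℤ) → y i = x i)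
    (n : ℕ) (hn : 2 * L₀ < n) :
    (μ {x ∈ X | ∀ j : ℕ, j < n → Sh j x ∉ H}).toReal ≤
      (Fintype.card A : ℝ) ^ (2 * L₀) * (K * Real.exp (2 * L₀ * B + D)) *
        Real.exp (-PX * n) * Lam Y f (n - 2 * L₀) := by
  classical
  set m := n - 2 * L₀ with hm
  have hmn : n = L₀ + (m + L₀) := by omega
  have hLm : L₀ + m ≤ n := by omega
  set Sn := {x ∈ X | ∀ j : ℕ, j < n → Sh j x ∉ H} with hSn
  set U := Words Sn n with hU
  set w' : (Fin n → A) → (Fin m → A) := fun u => subw m u L₀ hLm with hw'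
  -- covering by cylinders
  have hcover : Sn ⊆ ⋃ u ∈ U, {y ∈ X | ∀ i : Fin n, y ((i : ℕ) : ℤ) = u i} := by
    intro x hx
    refine Set.mem_iUnion₂.2 ⟨fun i : Fin n => x ((i : ℕ) : ℤ), ?_, ?_⟩
    · rw [hU, mem_words_iff]
      exact ⟨x, hx, fun i => rfl⟩
    · exact ⟨hx.1, fun i => rfl⟩
  have h1 : (μ Sn).toReal ≤
      ∑ u ∈ U, (μ {y ∈ X | ∀ i : Fin n, y ((i : ℕ) : ℤ) = u i}).toReal := by
    calc (μ Sn).toReal ≤ (∑ u ∈ U, μ {y ∈ X | ∀ i : Fin n, y ((i : ℕ) : ℤ) = u i}).toReal := by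
          refine ENNReal.toReal_mono ?_ ?_
          · exact (ENNReal.sum_ne_top.mpr fun u _ => measure_ne_top μ _)
          · exact le_trans (measure_mono hcover) (measure_biUnion_finset_le _ _)
      _ = ∑ u ∈ U, (μ {y ∈ X | ∀ i : Fin n, y ((i : ℕ) : ℤ) = u i}).toReal :=
          ENNReal.toReal_sum fun u _ => measure_ne_top μ _
  -- per-word bound
  have hper : ∀ u ∈ U, w' u ∈ Words Y m ∧
      (μ {y ∈ X | ∀ i : Fin n, y ((i : ℕ) : ℤ) = u i}).toReal ≤
        K * Real.exp (-PX * n) * Real.exp (2 * L₀ * B + D) * Real.exp (Ssup Y f m (w' u)) := by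
    intro u hu
    rw [hU, mem_words_iff] at hu
    obtain ⟨xu, hxuS, hxuw⟩ := hu
    have hxuX : xu ∈ X := hxuS.1
    have hxuH : ∀ j : ℕ, j < n → Sh (j : ℤ) xu ∉ H := hxuS.2
    set z := Sh (L₀ : ℤ) xu with hz
    have hzX : z ∈ X := hXsh _ xu hxuX
    have hzavoid : ∀ j : ℤ, -(L₀ : ℤ) ≤ j → j < (m : ℤ) + L₀ → Sh j z ∉ H := by
      intro j hj1 hj2
      rw [hz, sh_sh]
      have hcast : ((j + L₀).toNat : ℤ) = j + (L₀ : ℤ) := Int.toNat_of_nonneg (by omega)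
      rw [← hcast]
      refine hxuH (j + L₀).toNat (by omega)
    obtain ⟨yv, hyvY, hyva⟩ := hpump m z hzX hzavoid
    have hagree : ∀ i : Fin m, yv ((i : ℕ) : ℤ) = w' u i := by
      intro i
      have e1 : yv ((i : ℕ) : ℤ) = z ((i : ℕ) : ℤ) :=
        hyva _ (by positivity) (by exact_mod_cast i.isLt)
      have e2 : z ((i : ℕ) : ℤ) = xu (((L₀ + (i : ℕ) : ℕ) : ℕ) : ℤ) := by
        rw [hz]
        simp only [Sh]
        congr 1
        push_cast
        ring
      have e3 : xu (((L₀ + (i : ℕ) : ℕ) : ℕ) : ℤ) = u ⟨L₀ + (i : ℕ), by omega⟩ :=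
        hxuw ⟨L₀ + (i : ℕ), by omega⟩
      rw [e1, e2, e3]
      rfl
    have hwmem : w' u ∈ Words Y m := by
      rw [mem_words_iff]
      exact ⟨yv, hyvY, hagree⟩
    refine ⟨hwmem, ?_⟩
    -- birkhoff decomposition
    have hb1 : Birk f n xu = Birk f L₀ xu + (Birk f m z + Birk f L₀ (Sh (m : ℤ) z)) := by
      rw [hmn, birk_add, birk_add, hz]
    have hb2 : |Birk f L₀ xu| ≤ L₀ * B := birk_abs_le f B hB L₀ xu
    have hb3 : |Birk f L₀ (Sh (m : ℤ) z)| ≤ L₀ * B := birk_abs_le f B hB L₀ _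
    have hb4 : |Birk f m z - Birk f m yv| ≤ D :=
      hdist m z yv fun i h0 him => (hyva i h0 him).symm
    have hb5 : Birk f m yv ≤ Ssup Y f m (w' u) :=
      birk_le_Ssup Y f B hB m (w' u) hyvY hagree
    have hbirk : Birk f n xu ≤ 2 * L₀ * B + D + Ssup Y f m (w' u) := by
      have := abs_le.1 hb2
      have := abs_le.1 hb3
      have := abs_le.1 hb4
      rw [hb1]
      push_cast at *
      linarith
    have hseteq := cyl_congr X n xu u hxuw
    calc (μ {y ∈ X | ∀ i : Fin n, y ((i : ℕ) : ℤ) = u i}).toReal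
        = (μ {y ∈ X | ∀ i : Fin n, y ((i : ℕ) : ℤ) = xu ((i : ℕ) : ℤ)}).toReal := by
          rw [hseteq]
      _ ≤ K * Real.exp (-PX * n + Birk f n xu) := hGU xu hxuX n (by omega)
      _ ≤ K * Real.exp (-PX * n + (2 * L₀ * B + D + Ssup Y f m (w' u))) := by
          refine mul_le_mul_of_nonneg_left (Real.exp_le_exp.2 (by linarith)) hK0
      _ = K * Real.exp (-PX * n) * Real.exp (2 * L₀ * B + D) * Real.exp (Ssup Y f m (w' u)) := by
          rw [Real.exp_add, Real.exp_add]
          ring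
  -- injectivity of the splitting map
  set φ : (Fin n → A) → (Fin L₀ → A) × (Fin m → A) × (Fin L₀ → A) := fun u =>
    (fun i => u ⟨(i : ℕ), by omega⟩, w' u, fun i => u ⟨L₀ + m + (i : ℕ), by omega⟩) with hφ
  have hinj : ∀ u ∈ U, ∀ v ∈ U, φ u = φ v → u = v := by
    intro u _ v _ h
    have hL := congrArg Prod.fst h
    have hM := congrArg (fun p => p.2.1) h
    have hR := congrArg (fun p => p.2.2) h
    simp only [hφ] at hL hM hR
    funext i
    by_cases hi1 : (i : ℕ) < L₀
    · have h' : u ⟨(i : ℕ), by omega⟩ = v ⟨(i : ℕ), by omega⟩ := congrFun hL ⟨(i : ℕ), hi1⟩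
      have hieq : (⟨(i : ℕ), by omega⟩ : Fin n) = i := Fin.ext rfl
      rwa [hieq] at h'
    · by_cases hi2 : (i : ℕ) < L₀ + m
      · have h' : u ⟨L₀ + ((i : ℕ) - L₀), by omega⟩ = v ⟨L₀ + ((i : ℕ) - L₀), by omega⟩ := by
          simpa [hw', subw] using congrFun hM ⟨(i : ℕ) - L₀, by omega⟩
        have hieq : (⟨L₀ + ((i : ℕ) - L₀), by omega⟩ : Fin n) = i := Fin.ext (by simp; omega)
        rwa [hieq] at h'
      · have h' : u ⟨L₀ + m + ((i : ℕ) - (L₀ + m)), by omega⟩ =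
            v ⟨L₀ + m + ((i : ℕ) - (L₀ + m)), by omega⟩ := by
          simpa using congrFun hR ⟨(i : ℕ) - (L₀ + m), by omega⟩
        have hieq : (⟨L₀ + m + ((i : ℕ) - (L₀ + m)), by omega⟩ : Fin n) = i :=
          Fin.ext (by simp; omega)
        rwa [hieq] at h'
  -- key counting bound
  have hproj : ∀ u, (φ u).2.1 = w' u := fun u => rfl
  have hkey : ∑ u ∈ U, Real.exp (Ssup Y f m (w' u)) ≤
      (Fintype.card A : ℝ) ^ (2 * L₀) * Lam Y f m := by
    have step1 : ∑ u ∈ U, Real.exp (Ssup Y f m (w' u)) ≤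
        ∑ p ∈ (Finset.univ : Finset (Fin L₀ → A)) ×ˢ
            (Words Y m ×ˢ (Finset.univ : Finset (Fin L₀ → A))),
          Real.exp (Ssup Y f m p.2.1) := by
      have := sum_le_of_inj U ((Finset.univ ×ˢ (Words Y m ×ˢ Finset.univ)) :
          Finset ((Fin L₀ → A) × (Fin m → A) × (Fin L₀ → A))) φ hinj
        (fun u hu => by
          rw [Finset.mem_product, Finset.mem_product]
          refine ⟨Finset.mem_univ _, ?_, Finset.mem_univ _⟩
          rw [hproj u]
          exact (hper u hu).1)
        (fun p => Real.exp (Ssup Y f m p.2.1)) (fun b _ => (Real.exp_pos _).le)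
      refine le_trans (le_of_eq (Finset.sum_congr rfl fun u _ => rfl)) this
    refine le_trans step1 (le_of_eq ?_)
    have hcardL : (Finset.univ : Finset (Fin L₀ → A)).card = Fintype.card A ^ L₀ := by
      rw [Finset.card_univ, Fintype.card_fun, Fintype.card_fin]
    have e1 : ∀ _x : Fin L₀ → A,
        ∑ y ∈ Words Y m ×ˢ (Finset.univ : Finset (Fin L₀ → A)),
            Real.exp (Ssup Y f m y.1)
          = (Fintype.card A : ℝ) ^ L₀ * Lam Y f m := by
      intro _x
      rw [Finset.sum_product, Lam, Finset.mul_sum]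
      refine Finset.sum_congr rfl fun w _ => ?_
      show ∑ _y ∈ (Finset.univ : Finset (Fin L₀ → A)), Real.exp (Ssup Y f m w) = _
      rw [Finset.sum_const, hcardL, nsmul_eq_mul]
      push_cast
      ring
    rw [Finset.sum_product]
    calc ∑ x ∈ (Finset.univ : Finset (Fin L₀ → A)),
          ∑ y ∈ Words Y m ×ˢ (Finset.univ : Finset (Fin L₀ → A)),
            Real.exp (Ssup Y f m y.1)
        = ∑ _x ∈ (Finset.univ : Finset (Fin L₀ → A)),
            (Fintype.card A : ℝ) ^ L₀ * Lam Y f m :=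
          Finset.sum_congr rfl fun x _ => e1 x
      _ = (Fintype.card A : ℝ) ^ (2 * L₀) * Lam Y f m := by
          rw [Finset.sum_const, hcardL, nsmul_eq_mul, two_mul, pow_add]
          push_cast
          ring
  -- assembly
  calc (μ Sn).toReal ≤ ∑ u ∈ U, (μ {y ∈ X | ∀ i : Fin n, y ((i : ℕ) : ℤ) = u i}).toReal := h1
    _ ≤ ∑ u ∈ U, K * Real.exp (-PX * n) * Real.exp (2 * L₀ * B + D) *
          Real.exp (Ssup Y f m (w' u)) := Finset.sum_le_sum fun u hu => (hper u hu).2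
    _ = K * Real.exp (-PX * n) * Real.exp (2 * L₀ * B + D) *
          ∑ u ∈ U, Real.exp (Ssup Y f m (w' u)) := by rw [← Finset.mul_sum]
    _ ≤ K * Real.exp (-PX * n) * Real.exp (2 * L₀ * B + D) *
          ((Fintype.card A : ℝ) ^ (2 * L₀) * Lam Y f m) := by
        refine mul_le_mul_of_nonneg_left hkey (by positivity)
    _ = (Fintype.card A : ℝ) ^ (2 * L₀) * (K * Real.exp (2 * L₀ * B + D)) *
          Real.exp (-PX * n) * Lam Y f m := by ring

lemma elog_rpow_pos {x : ℝ} (hx : 0 < x) (c : ℝ) :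
    elog (x ^ c) = ((c * Real.log x : ℝ) : EReal) := by
  rw [elog, if_neg (not_le.2 (Real.rpow_pos_of_pos hx c)), Real.log_rpow hx]

lemma elog_zero_rpow {c : ℝ} (hc : c ≠ 0) : elog ((0 : ℝ) ^ c) = ⊥ := by
  rw [Real.zero_rpow hc, elog, if_pos le_rfl]

lemma lam_pos [Fintype A] (Y : Set (ℤ → A)) (f : (ℤ → A) → ℝ) (hY : Y.Nonempty) (m : ℕ) :
    0 < Lam Y f m := by
  obtain ⟨y₀, hy₀⟩ := hY
  have hw : (fun i : Fin m => y₀ ((i : ℕ) : ℤ)) ∈ Words Y m :=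
    mem_words_iff.2 ⟨y₀, hy₀, fun i => rfl⟩
  rw [Lam]
  exact Finset.sum_pos' (fun w _ => (Real.exp_pos _).le) ⟨_, hw, Real.exp_pos _⟩

lemma lam_lower [Fintype A] (Y : Set (ℤ → A)) (f : (ℤ → A) → ℝ) (B : ℝ) (hB : ∀ x, |f x| ≤ B)
    (hY : Y.Nonempty) (m : ℕ) : Real.exp (-(m * B)) ≤ Lam Y f m := by
  obtain ⟨y₀, hy₀⟩ := hY
  have hw : (fun i : Fin m => y₀ ((i : ℕ) : ℤ)) ∈ Words Y m :=
    mem_words_iff.2 ⟨y₀, hy₀, fun i => rfl⟩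
  have h1 : Real.exp (-(m * B)) ≤ Real.exp (Ssup Y f m fun i : Fin m => y₀ ((i : ℕ) : ℤ)) := by
    refine Real.exp_le_exp.2 ?_
    have h2 : Birk f m y₀ ≤ Ssup Y f m _ := birk_le_Ssup Y f B hB m _ hy₀ fun i => rfl
    have h3 := (abs_le.1 (birk_abs_le f B hB m y₀)).1
    linarith
  refine le_trans h1 ?_
  rw [Lam]
  exact Finset.single_le_sum (fun w _ => (Real.exp_pos _).le) hw

lemma lam_upper [Fintype A] (Y : Set (ℤ → A)) (f : (ℤ → A) → ℝ) (B : ℝ) (hB : ∀ x, |f x| ≤ B)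
    (m : ℕ) : Lam Y f m ≤ (Fintype.card A : ℝ) ^ m * Real.exp (m * B) := by
  have h1 : ∀ w ∈ Words Y m, Real.exp (Ssup Y f m w) ≤ Real.exp (m * B) := by
    intro w hw
    rw [mem_words_iff] at hw
    refine Real.exp_le_exp.2 (Ssup_le Y f m w hw fun x _ _ => ?_)
    exact (abs_le.1 (birk_abs_le f B hB m x)).2
  calc Lam Y f m ≤ ∑ _w ∈ Words Y m, Real.exp (m * B) := Finset.sum_le_sum h1
    _ = (Words Y m).card * Real.exp (m * B) := by rw [Finset.sum_const, nsmul_eq_mul]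
    _ ≤ (Fintype.card A : ℝ) ^ m * Real.exp (m * B) := by
        refine mul_le_mul_of_nonneg_right ?_ (Real.exp_pos _).le
        have h2 : (Words Y m).card ≤ (Finset.univ : Finset (Fin m → A)).card :=
          Finset.card_le_card (Finset.subset_univ _)
        have h3 : (Finset.univ : Finset (Fin m → A)).card = Fintype.card A ^ m := by
          rw [Finset.card_univ, Fintype.card_fun, Fintype.card_fin]
        rw [h3] at h2
        exact_mod_cast h2


set_option maxHeartbeats 1000000 in
/-- escape rate formula: Let `X` be a (nontrivial) mixing SFT, `f : X → ℝ`
Hölder continuous with associated Gibbs measure `μ` (with constant `K` and pressure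
`P_X(f) = PX`), `H` a finite union of cylinder sets, and
`Y = X \ ∪_{m∈ℤ} σ^{−m}(H)` the survivor set.  Then the escape rate exists and satisfies
`ϱ(μ : H) = lim_m (1/m) log μ({x ∈ X : σ^j(x) ∉ H for 0 ≤ j < m}) = P_Y(f) − P_X(f)`,
where `P_Y(f)` is the (extended-real) pressure of `f` on `Y`, with `P_∅(f) = −∞`.
(The quantity `elog (t ^ (1/(m:ℝ)))` is `(1/m) log t` for `t > 0` and `−∞` for `t = 0`.) -/
theorem stmt14 [Fintype A] [TopologicalSpace A] [DiscreteTopology A]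
    [MeasurableSpace A] [MeasurableSingletonClass A]
    (X : Set (ℤ → A)) (hXsub : IsSubshift X) (hXsft : IsSFT X) (hXmix : IsMixingSubshift X)
    (hXnontriv : ∃ x ∈ X, ∃ y ∈ X, x ≠ y)
    (f : (ℤ → A) → ℝ) (hf : Continuous f) (hfH : HolderPotential f)
    (μ : Measure (ℤ → A)) [IsProbabilityMeasure μ] (hμX : μ X = 1)
    (K PX : ℝ) (hK : 1 < K)
    (hGibbs : ∀ x ∈ X, ∀ m : ℕ, 1 ≤ m →
      K⁻¹ * Real.exp (-PX * m + Birk f m x) ≤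
          (μ {y ∈ X | ∀ i : Fin m, y ((i : ℕ) : ℤ) = x ((i : ℕ) : ℤ)}).toReal ∧
        (μ {y ∈ X | ∀ i : Fin m, y ((i : ℕ) : ℤ) = x ((i : ℕ) : ℤ)}).toReal ≤
          K * Real.exp (-PX * m + Birk f m x))
    (hPX : Tendsto (fun m : ℕ => elog ((Lam X f m) ^ (1 / (m : ℝ)))) atTop (𝓝 (PX : EReal)))
    (nH : ℕ) (hnH : 1 ≤ nH) (Hw : Finset (Fin nH → A)) (H : Set (ℤ → A))
    (hH : H = ⋃ w ∈ Hw, {x : ℤ → A | ∀ i : Fin nH, x ((i : ℕ) : ℤ) = w i})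
    (Y : Set (ℤ → A))
    (hY : Y = X \ ⋃ m : ℤ, (fun x : ℤ → A => fun i => x (i + m)) ⁻¹' H)
    (PY : EReal)
    (hPY : Tendsto (fun m : ℕ => elog ((Lam Y f m) ^ (1 / (m : ℝ)))) atTop (𝓝 PY)) :
    Tendsto (fun m : ℕ =>
        elog ((μ {x ∈ X | ∀ j : ℕ, j < m →
            (fun i : ℤ => x (i + (j : ℤ))) ∉ H}).toReal ^ (1 / (m : ℝ))))
      atTop (𝓝 (PY - (PX : EReal))) := by
  classical
  obtain ⟨m₀, Fo, hXchar⟩ := hXsft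
  obtain ⟨x₀, hx₀X, -⟩ := hXnontriv
  have hANe : Nonempty A := ⟨x₀ 0⟩
  -- bound for f
  obtain ⟨B, hBmem⟩ := (isCompact_range hf.abs).bddAbove
  have hB : ∀ x, |f x| ≤ B := fun x => hBmem (Set.mem_range_self x)
  have hB0 : 0 ≤ B := le_trans (abs_nonneg _) (hB x₀)
  -- Hölder distortion
  obtain ⟨C, θ, hθ0, hθ1, hHo⟩ := hfH
  have hC : 0 ≤ C := by
    have h := hHo 0 x₀ x₀ fun i _ => rfl
    simpa using h
  set D := 2 * C / (1 - θ) with hD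
  have hdist : ∀ (m : ℕ) (x y : ℤ → A), (∀ i : ℤ, 0 ≤ i → i < (m : ℤ) → x i = y i) →
      |Birk f m x - Birk f m y| ≤ D := fun m x y hxy => birk_dist f C θ hθ0 hθ1 hC hHo m x y hxy
  have hD0 : 0 ≤ D := div_nonneg (by linarith) (by linarith)
  -- constants
  set R := max m₀ nH with hR
  have hm₀R : m₀ ≤ R := le_max_left _ _
  have hnHR : nH ≤ R := le_max_right _ _
  have hR1 : 1 ≤ R := le_trans hnH hnHR
  set L₀ := R * (Fintype.card (Fin R → A) + 2) with hL₀
  have hK0 : (0 : ℝ) < K := lt_trans zero_lt_one hK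
  have hcard0 : (0 : ℝ) < Fintype.card A := by exact_mod_cast Fintype.card_pos
  -- structural facts
  have hXsh : ∀ (t : ℤ), ∀ x ∈ X, Sh t x ∈ X := by
    intro t x hx
    rw [hXchar] at hx ⊢
    intro t'
    have hfun : (fun i : Fin m₀ => Sh t x (t' + ((i : ℕ) : ℤ))) =
        fun i : Fin m₀ => x ((t' + t) + ((i : ℕ) : ℤ)) := by
      funext i
      show x ((t' + ((i : ℕ) : ℤ)) + t) = x ((t' + t) + ((i : ℕ) : ℤ))
      congr 1
      ring
    rw [hfun]
    exact hx (t' + t)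
  have hHagree : ∀ x y : ℤ → A, (∀ i : Fin nH, y ((i : ℕ) : ℤ) = x ((i : ℕ) : ℤ)) →
      x ∈ H → y ∈ H := by
    intro x y hagree hxH
    rw [hH] at hxH ⊢
    rw [Set.mem_iUnion₂] at hxH ⊢
    obtain ⟨w, hw, hxw⟩ := hxH
    exact ⟨w, hw, fun i => (hagree i).trans (hxw i)⟩
  have hYX : Y ⊆ X := by rw [hY]; exact Set.diff_subset
  have hHY : ∀ x ∈ Y, ∀ j : ℤ, Sh j x ∉ H := by
    intro x hx j hmem
    rw [hY] at hx
    exact hx.2 (Set.mem_iUnion.2 ⟨j, hmem⟩)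
  have hpump : ∀ (m : ℕ) (x : ℤ → A), x ∈ X →
      (∀ j : ℤ, -(L₀ : ℤ) ≤ j → j < (m : ℤ) + L₀ → Sh j x ∉ H) →
      ∃ y ∈ Y, ∀ i : ℤ, 0 ≤ i → i < (m : ℤ) → y i = x i := by
    intro m x hx hav
    obtain ⟨y, hyX, hyH, hya⟩ :=
      pump X H m₀ Fo hXchar nH hHagree R hm₀R hnHR hR1 L₀ rfl m x hx hav
    refine ⟨y, ?_, hya⟩
    rw [hY]
    refine ⟨hyX, fun hmem => ?_⟩
    rw [Set.mem_iUnion] at hmem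
    obtain ⟨t, ht⟩ := hmem
    exact hyH t ht
  have hXmeas : MeasurableSet X := meas_SFT X m₀ Fo hXchar
  -- the measure sequence
  set q : ℕ → ℝ := fun n => (μ {x ∈ X | ∀ j : ℕ, j < n → Sh (j : ℤ) x ∉ H}).toReal with hqdef
  suffices hsuff : Tendsto (fun n : ℕ => elog (q n ^ (1 / (n : ℝ)))) atTop
      (𝓝 (PY - (PX : EReal))) by exact hsuff
  have hGU : ∀ x ∈ X, ∀ m : ℕ, 1 ≤ m →
      (μ {y ∈ X | ∀ i : Fin m, y ((i : ℕ) : ℤ) = x ((i : ℕ) : ℤ)}).toReal ≤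
        K * Real.exp (-PX * m + Birk f m x) := fun x hx m hm => (hGibbs x hx m hm).2
  have hGL : ∀ x ∈ X, ∀ m : ℕ, 1 ≤ m →
      K⁻¹ * Real.exp (-PX * m + Birk f m x) ≤
        (μ {y ∈ X | ∀ i : Fin m, y ((i : ℕ) : ℤ) = x ((i : ℕ) : ℤ)}).toReal :=
    fun x hx m hm => (hGibbs x hx m hm).1
  set C₂ : ℝ := (Fintype.card A : ℝ) ^ (2 * L₀) * (K * Real.exp (2 * L₀ * B + D)) with hC₂
  have hC₂pos : 0 < C₂ := by positivity
  have hupper : ∀ n : ℕ, 2 * L₀ < n →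
      q n ≤ C₂ * Real.exp (-PX * n) * Lam Y f (n - 2 * L₀) := by
    intro n hn
    have h := escape_upper X H Y f μ K PX B D (le_of_lt hK0) L₀ hGU hB hdist hXsh hpump n hn
    calc q n ≤ (Fintype.card A : ℝ) ^ (2 * L₀) * (K * Real.exp (2 * L₀ * B + D)) *
          Real.exp (-PX * n) * Lam Y f (n - 2 * L₀) := h
      _ = C₂ * Real.exp (-PX * n) * Lam Y f (n - 2 * L₀) := by rw [hC₂]
  have hlower : ∀ n : ℕ, 1 ≤ n →
      K⁻¹ * Real.exp (-PX * ((n + (nH - 1) : ℕ) : ℝ)) * Lam Y f (n + (nH - 1)) ≤ q n := by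
    intro n hn
    exact escape_lower X H Y f μ K PX B hK0 hB nH hnH hGL hYX hHY hHagree hXmeas n hn
      (n + (nH - 1)) (by omega)
  -- case split on Y
  rcases Set.eq_empty_or_nonempty Y with hYe | hYne
  · -- Y empty : everything is eventually ⊥
    have hW0 : ∀ m : ℕ, Words Y m = ∅ := by
      intro m
      refine Finset.eq_empty_of_forall_notMem fun w hw => ?_
      rw [mem_words_iff] at hw
      obtain ⟨x, hx, -⟩ := hw
      rw [hYe] at hx
      exact hx
    have hLam0 : ∀ m : ℕ, Lam Y f m = 0 := by
      intro m
      rw [Lam, hW0, Finset.sum_empty]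
    have hbot : Tendsto (fun m : ℕ => elog ((Lam Y f m) ^ (1 / (m : ℝ)))) atTop (𝓝 ⊥) := by
      refine Tendsto.congr' ?_
        (tendsto_const_nhds : Tendsto (fun _ : ℕ => (⊥ : EReal)) atTop _)
      filter_upwards [eventually_ge_atTop 1] with m hm
      rw [hLam0 m, elog_zero_rpow]
      have : (1 : ℝ) ≤ (m : ℝ) := by exact_mod_cast hm
      positivity
    have hPYbot : PY = ⊥ := tendsto_nhds_unique hPY hbot
    rw [hPYbot, EReal.bot_sub]
    refine Tendsto.congr' ?_
      (tendsto_const_nhds : Tendsto (fun _ : ℕ => (⊥ : EReal)) atTop _)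
    filter_upwards [eventually_gt_atTop (2 * L₀), eventually_ge_atTop 1] with n hn hn1
    have hup := hupper n hn
    rw [hLam0, mul_zero] at hup
    have hq0 : q n = 0 := le_antisymm hup ENNReal.toReal_nonneg
    have hcast : (1 : ℝ) ≤ (n : ℝ) := by exact_mod_cast hn1
    have : elog (q n ^ (1 / (n : ℝ))) = ⊥ := by
      rw [hq0, elog_zero_rpow (by positivity)]
    exact this.symm
  · -- Y nonempty: sandwich argument
    have hlampos : ∀ m : ℕ, 0 < Lam Y f m := lam_pos Y f hYne
    set ℓ : ℕ → ℝ := fun m => (1 / (m : ℝ)) * Real.log (Lam Y f m) with hℓ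
    have hPYcoe : Tendsto (fun m : ℕ => ((ℓ m : ℝ) : EReal)) atTop (𝓝 PY) := by
      refine Tendsto.congr' ?_ hPY
      filter_upwards [eventually_ge_atTop 1] with m hm
      rw [elog_rpow_pos (hlampos m) (1 / (m : ℝ))]
    have hℓlb : ∀ m : ℕ, 1 ≤ m → -B ≤ ℓ m := by
      intro m hm
      have hm0 : (0 : ℝ) < m := by exact_mod_cast hm
      have h1 : -((m : ℝ) * B) ≤ Real.log (Lam Y f m) := by
        have := Real.log_le_log (Real.exp_pos _) (lam_lower Y f B hB hYne m)
        rwa [Real.log_exp] at this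
      have h2 : (1 / (m : ℝ)) * -((m : ℝ) * B) ≤ ℓ m :=
        mul_le_mul_of_nonneg_left h1 (by positivity)
      have h3 : (1 / (m : ℝ)) * -((m : ℝ) * B) = -B := by
        rw [one_div, inv_mul_eq_div, div_eq_iff (ne_of_gt hm0)]
        ring
      linarith
    have hℓub : ∀ m : ℕ, 1 ≤ m → ℓ m ≤ Real.log (Fintype.card A) + B := by
      intro m hm
      have hm0 : (0 : ℝ) < m := by exact_mod_cast hm
      have h1 : Real.log (Lam Y f m) ≤ (m : ℝ) * Real.log (Fintype.card A) + (m : ℝ) * B := by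
        have h2 := Real.log_le_log (hlampos m) (lam_upper Y f B hB m)
        rw [Real.log_mul (by positivity) (Real.exp_ne_zero _), Real.log_exp,
          Real.log_pow] at h2
        linarith
      have h2 : ℓ m ≤ (1 / (m : ℝ)) * ((m : ℝ) * Real.log (Fintype.card A) + (m : ℝ) * B) :=
        mul_le_mul_of_nonneg_left h1 (by positivity)
      have h3 : (1 / (m : ℝ)) * ((m : ℝ) * Real.log (Fintype.card A) + (m : ℝ) * B) =
          Real.log (Fintype.card A) + B := by
        rw [one_div, inv_mul_eq_div, div_eq_iff (ne_of_gt hm0)]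
        ring
      linarith
    have hPYlb : ((-B : ℝ) : EReal) ≤ PY := by
      refine ge_of_tendsto hPYcoe ?_
      filter_upwards [eventually_ge_atTop 1] with m hm
      exact EReal.coe_le_coe_iff.2 (hℓlb m hm)
    have hPYub : PY ≤ ((Real.log (Fintype.card A) + B : ℝ) : EReal) := by
      refine le_of_tendsto hPYcoe ?_
      filter_upwards [eventually_ge_atTop 1] with m hm
      exact EReal.coe_le_coe_iff.2 (hℓub m hm)
    have hPYnebot : PY ≠ ⊥ := by
      intro h
      rw [h] at hPYlb
      exact (EReal.bot_lt_coe (-B)).not_ge hPYlb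
    have hPYnetop : PY ≠ ⊤ := by
      intro h
      rw [h] at hPYub
      exact (EReal.coe_lt_top _).not_ge hPYub
    set py : ℝ := PY.toReal with hpydef
    have hpyeq : PY = ((py : ℝ) : EReal) := (EReal.coe_toReal hPYnetop hPYnebot).symm
    have hℓtend : Tendsto ℓ atTop (𝓝 py) := by
      rw [hpyeq] at hPYcoe
      exact EReal.tendsto_coe.1 hPYcoe
    -- shifted index limits
    have hshift : ∀ g : ℕ → ℕ, Tendsto g atTop atTop →
        Tendsto (fun n : ℕ => ((g n : ℝ)) / (n : ℝ)) atTop (𝓝 1) →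
        Tendsto (fun n : ℕ => (1 / (n : ℝ)) * Real.log (Lam Y f (g n))) atTop (𝓝 py) := by
      intro g hg hratio
      have h1 : Tendsto (fun n => ℓ (g n)) atTop (𝓝 py) := hℓtend.comp hg
      have h2 : Tendsto (fun n => ((g n : ℝ) / (n : ℝ)) * ℓ (g n)) atTop (𝓝 (1 * py)) :=
        hratio.mul h1
      rw [one_mul] at h2
      refine Tendsto.congr' ?_ h2
      filter_upwards [eventually_ge_atTop 1, hg.eventually_ge_atTop 1] with n hn hgn
      have hn0 : ((n : ℝ)) ≠ 0 := by positivity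
      have hgn0 : ((g n : ℝ)) ≠ 0 := by
        have : (1 : ℝ) ≤ (g n : ℝ) := by exact_mod_cast hgn
        positivity
      rw [hℓ]
      field_simp
    have hratio1 : ∀ c : ℕ, Tendsto (fun n : ℕ => ((n + c : ℕ) : ℝ) / (n : ℝ)) atTop (𝓝 1) := by
      intro c
      have h1 : Tendsto (fun n : ℕ => 1 + (c : ℝ) / n) atTop (𝓝 (1 + 0)) :=
        tendsto_const_nhds.add (tendsto_const_div_atTop_nhds_zero_nat (c : ℝ))
      rw [add_zero] at h1
      refine Tendsto.congr' ?_ h1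
      filter_upwards [eventually_ge_atTop 1] with n hn
      have hn0 : ((n : ℝ)) ≠ 0 := by positivity
      push_cast
      field_simp
    have hratio2 : ∀ c : ℕ, Tendsto (fun n : ℕ => ((n - c : ℕ) : ℝ) / (n : ℝ)) atTop (𝓝 1) := by
      intro c
      have h1 : Tendsto (fun n : ℕ => 1 - (c : ℝ) / n) atTop (𝓝 (1 - 0)) :=
        tendsto_const_nhds.sub (tendsto_const_div_atTop_nhds_zero_nat (c : ℝ))
      rw [sub_zero] at h1
      refine Tendsto.congr' ?_ h1
      filter_upwards [eventually_ge_atTop (c + 1)] with n hn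
      have hn0 : ((n : ℝ)) ≠ 0 := Nat.cast_ne_zero.2 (by omega)
      have hcn : (c : ℝ) ≤ (n : ℝ) := by exact_mod_cast le_of_lt (Nat.lt_of_lt_of_le (Nat.lt_succ_self c) hn)
      rw [Nat.cast_sub (by omega)]
      field_simp
    -- positivity of q
    have hqpos : ∀ n : ℕ, 1 ≤ n → 0 < q n := by
      intro n hn
      refine lt_of_lt_of_le ?_ (hlower n hn)
      exact mul_pos (mul_pos (inv_pos.2 hK0) (Real.exp_pos _)) (hlampos _)
    set a : ℕ → ℝ := fun n => (1 / (n : ℝ)) * Real.log (q n) with ha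
    -- lower comparison sequence
    set LB : ℕ → ℝ := fun n => Real.log K⁻¹ * (1 / (n : ℝ)) +
        (-PX) * (((n + (nH - 1) : ℕ) : ℝ) / (n : ℝ)) +
        (1 / (n : ℝ)) * Real.log (Lam Y f (n + (nH - 1))) with hLB
    have hLBtend : Tendsto LB atTop (𝓝 (py - PX)) := by
      have t1 : Tendsto (fun n : ℕ => Real.log K⁻¹ * (1 / (n : ℝ))) atTop
          (𝓝 (Real.log K⁻¹ * 0)) :=
        tendsto_const_nhds.mul (by simpa using tendsto_const_div_atTop_nhds_zero_nat (1 : ℝ))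
      have t2 : Tendsto (fun n : ℕ => (-PX) * (((n + (nH - 1) : ℕ) : ℝ) / (n : ℝ))) atTop
          (𝓝 ((-PX) * 1)) := tendsto_const_nhds.mul (hratio1 (nH - 1))
      have t3 : Tendsto (fun n : ℕ => (1 / (n : ℝ)) * Real.log (Lam Y f (n + (nH - 1))))
          atTop (𝓝 py) := hshift _ (tendsto_add_atTop_nat (nH - 1)) (hratio1 (nH - 1))
      have := (t1.add t2).add t3
      have heq : Real.log K⁻¹ * 0 + (-PX) * 1 + py = py - PX := by ring
      rwa [heq] at this
    -- upper comparison sequence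
    set UB : ℕ → ℝ := fun n => Real.log C₂ * (1 / (n : ℝ)) +
        (-PX) * (((n : ℕ) : ℝ) / (n : ℝ)) +
        (1 / (n : ℝ)) * Real.log (Lam Y f (n - 2 * L₀)) with hUB
    have hUBtend : Tendsto UB atTop (𝓝 (py - PX)) := by
      have t1 : Tendsto (fun n : ℕ => Real.log C₂ * (1 / (n : ℝ))) atTop
          (𝓝 (Real.log C₂ * 0)) :=
        tendsto_const_nhds.mul (by simpa using tendsto_const_div_atTop_nhds_zero_nat (1 : ℝ))
      have tr : Tendsto (fun n : ℕ => ((n : ℕ) : ℝ) / (n : ℝ)) atTop (𝓝 1) := by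
        have := hratio1 0
        simpa using this
      have t2 : Tendsto (fun n : ℕ => (-PX) * (((n : ℕ) : ℝ) / (n : ℝ))) atTop
          (𝓝 ((-PX) * 1)) := tendsto_const_nhds.mul tr
      have t3 : Tendsto (fun n : ℕ => (1 / (n : ℝ)) * Real.log (Lam Y f (n - 2 * L₀)))
          atTop (𝓝 py) := hshift _ (tendsto_sub_atTop_nat (2 * L₀)) (hratio2 (2 * L₀))
      have := (t1.add t2).add t3
      have heq : Real.log C₂ * 0 + (-PX) * 1 + py = py - PX := by ring
      rwa [heq] at this
    -- eventual inequalities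
    have hLBle : ∀ᶠ n in atTop, LB n ≤ a n := by
      filter_upwards [eventually_ge_atTop 1] with n hn
      have hn0 : (0 : ℝ) < (n : ℝ) := by exact_mod_cast hn
      have h1 := hlower n hn
      have hLpos : (0 : ℝ) < K⁻¹ * Real.exp (-PX * ((n + (nH - 1) : ℕ) : ℝ)) *
          Lam Y f (n + (nH - 1)) :=
        mul_pos (mul_pos (inv_pos.2 hK0) (Real.exp_pos _)) (hlampos _)
      have h2 : Real.log (K⁻¹ * Real.exp (-PX * ((n + (nH - 1) : ℕ) : ℝ)) *
          Lam Y f (n + (nH - 1))) ≤ Real.log (q n) := Real.log_le_log hLpos h1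
      have h3 : Real.log (K⁻¹ * Real.exp (-PX * ((n + (nH - 1) : ℕ) : ℝ)) *
          Lam Y f (n + (nH - 1))) = Real.log K⁻¹ + (-PX * ((n + (nH - 1) : ℕ) : ℝ)) +
          Real.log (Lam Y f (n + (nH - 1))) := by
        rw [Real.log_mul (by positivity) (ne_of_gt (hlampos _)),
          Real.log_mul (by positivity) (Real.exp_ne_zero _), Real.log_exp]
      have h4 : (1 / (n : ℝ)) * (Real.log K⁻¹ + (-PX * ((n + (nH - 1) : ℕ) : ℝ)) +
          Real.log (Lam Y f (n + (nH - 1)))) ≤ a n := by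
        rw [ha]
        refine mul_le_mul_of_nonneg_left ?_ (by positivity)
        rw [← h3]
        exact h2
      refine le_trans (le_of_eq ?_) h4
      rw [hLB]
      field_simp
    have hUBle : ∀ᶠ n in atTop, a n ≤ UB n := by
      filter_upwards [eventually_gt_atTop (2 * L₀), eventually_ge_atTop 1] with n hn hn1
      have hn0 : (0 : ℝ) < (n : ℝ) := by exact_mod_cast hn1
      have h1 := hupper n hn
      have h2 : Real.log (q n) ≤ Real.log (C₂ * Real.exp (-PX * n) * Lam Y f (n - 2 * L₀)) :=
        Real.log_le_log (hqpos n hn1) h1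
      have h3 : Real.log (C₂ * Real.exp (-PX * n) * Lam Y f (n - 2 * L₀)) =
          Real.log C₂ + (-PX * (n : ℝ)) + Real.log (Lam Y f (n - 2 * L₀)) := by
        rw [Real.log_mul (by positivity) (ne_of_gt (hlampos _)),
          Real.log_mul (ne_of_gt hC₂pos) (Real.exp_ne_zero _), Real.log_exp]
      have h4 : a n ≤ (1 / (n : ℝ)) * (Real.log C₂ + (-PX * (n : ℝ)) +
          Real.log (Lam Y f (n - 2 * L₀))) := by
        rw [ha]
        refine mul_le_mul_of_nonneg_left ?_ (by positivity)
        rw [← h3]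
        exact h2
      refine le_trans h4 (le_of_eq ?_)
      rw [hUB]
      field_simp
    have hatend : Tendsto a atTop (𝓝 (py - PX)) :=
      tendsto_of_tendsto_of_tendsto_of_le_of_le' hLBtend hUBtend hLBle hUBle
    -- conclusion
    have hval : PY - (PX : EReal) = (((py - PX : ℝ)) : EReal) := by
      rw [hpyeq, ← EReal.coe_sub]
    rw [hval]
    have hfinal : Tendsto (fun n : ℕ => ((a n : ℝ) : EReal)) atTop
        (𝓝 (((py - PX : ℝ)) : EReal)) := EReal.tendsto_coe.2 hatend
    refine Tendsto.congr' ?_ hfinal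
    filter_upwards [eventually_ge_atTop 1] with n hn
    rw [elog_rpow_pos (hqpos n hn) (1 / (n : ℝ))]

end
end

section
/- Let X be a subshift, H a union of cylinder sets on words of length N, and for each k let μ_k be a probability measure supported on points x whose first k coordinates avoid all words of H (i.e., no subword of x[0,k) of length N lies in H), and let ν_k = (1/k) ∑_{j=0}^{k−1} σ^j_* μ_k. Suppose ν_{k_j} → ν weak* along a subsequence, and suppose [w] is a cylinder set (on a word w of length N) such that there exists k₀ with: for all k ≥ k₀, no word of length k avoiding H contains w. Then ν_k([w]) ≤ N/k for k ≥ k₀, and hence ν([w]) = 0. -/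
open MeasureTheory Filter Topology
open scoped ENNReal

/-- Let `Hw` be a set of forbidden words of length `N`, and for each `k` let
`μ_k` be a probability measure supported on points `x` whose window `x[0,k)` contains no word
of `Hw`, and `ν_k = (1/k) ∑_{j=0}^{k−1} σ^j_* μ_k`.  Suppose `ν_{k_j}([w]) → ν([w])` along a
subsequence `k_j → ∞` (as follows from weak* convergence, `[w]` being clopen), where `w` is a
word of length `N` such that for all `k ≥ k₀` no word of length `k` avoiding `Hw` contains
`w`.  Then `ν_k([w]) ≤ N/k` for `k ≥ k₀`, and hence `ν([w]) = 0`. -/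
theorem stmt16 {A : Type*} [Fintype A] [MeasurableSpace A] [MeasurableSingletonClass A]
    (N : ℕ) (hN : 1 ≤ N) (Hw : Finset (Fin N → A))
    (μk : ℕ → Measure (ℤ → A)) (hprob : ∀ k, IsProbabilityMeasure (μk k))
    (hsupp : ∀ k, μk k {x : ℤ → A | ∀ (j : ℕ) (hj : j + N ≤ k),
      (fun i : Fin N => x ((j : ℤ) + (i : ℕ))) ∉ Hw} = 1)
    (νk : ℕ → Measure (ℤ → A))
    (hν : ∀ k, νk k = (k : ℝ≥0∞)⁻¹ •
      ∑ j ∈ Finset.range k, Measure.map (fun (x : ℤ → A) (i : ℤ) => x (i + (j : ℤ))) (μk k))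
    (w : Fin N → A) (k₀ : ℕ)
    (hw : ∀ k, k₀ ≤ k → ∀ x : ℤ → A,
      (∀ (j : ℕ) (hj : j + N ≤ k), (fun i : Fin N => x ((j : ℤ) + (i : ℕ))) ∉ Hw) →
      ∀ (j : ℕ) (hj : j + N ≤ k), (fun i : Fin N => x ((j : ℤ) + (i : ℕ))) ≠ w)
    (ks : ℕ → ℕ) (hks : Tendsto ks atTop atTop)
    (ν : Measure (ℤ → A))
    (hconv : Tendsto (fun j : ℕ => νk (ks j) {x : ℤ → A | ∀ i : Fin N, x ((i : ℕ) : ℤ) = w i})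
      atTop (𝓝 (ν {x : ℤ → A | ∀ i : Fin N, x ((i : ℕ) : ℤ) = w i}))) :
    (∀ k, k₀ ≤ k → νk k {x : ℤ → A | ∀ i : Fin N, x ((i : ℕ) : ℤ) = w i} ≤ (N : ℝ≥0∞) / k) ∧
    ν {x : ℤ → A | ∀ i : Fin N, x ((i : ℕ) : ℤ) = w i} = 0 := by
  set S : Set (ℤ → A) := {x : ℤ → A | ∀ i : Fin N, x ((i : ℕ) : ℤ) = w i} with hS
  have hSmeas : MeasurableSet S := by
    have : S = ⋂ i : Fin N, (fun x : ℤ → A => x ((i : ℕ) : ℤ)) ⁻¹' {w i} := by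
      ext x; simp [hS, Set.mem_iInter]
    rw [this]
    exact MeasurableSet.iInter fun i =>
      (measurable_pi_apply _) (measurableSet_singleton _)
  have hTmeas : ∀ j : ℕ, Measurable (fun (x : ℤ → A) (i : ℤ) => x (i + (j : ℤ))) :=
    fun j => measurable_pi_lambda _ fun i => measurable_pi_apply _
  have key : ∀ k, k₀ ≤ k → νk k S ≤ (N : ℝ≥0∞) / k := by
    intro k hk
    haveI := hprob k
    -- measure of S under each shifted measure
    set m : ℕ → ℝ≥0∞ := fun j =>
      Measure.map (fun (x : ℤ → A) (i : ℤ) => x (i + (j : ℤ))) (μk k) S with hm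
    have happly : νk k S = (k : ℝ≥0∞)⁻¹ * ∑ j ∈ Finset.range k, m j := by
      rw [hν k]
      simp only [Measure.smul_apply, smul_eq_mul]
      congr 1
      exact Measure.finset_sum_apply _ _ _
    -- each term is zero when j + N ≤ k
    have hzero : ∀ j : ℕ, j + N ≤ k → m j = 0 := by
      intro j hj
      have hmj : m j = μk k ((fun (x : ℤ → A) (i : ℤ) => x (i + (j : ℤ))) ⁻¹' S) :=
        Measure.map_apply (hTmeas j) hSmeas
      rw [hmj]
      set G : Set (ℤ → A) := {x : ℤ → A | ∀ (j : ℕ) (hj : j + N ≤ k),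
        (fun i : Fin N => x ((j : ℤ) + (i : ℕ))) ∉ Hw} with hG
      have hsub : G ⊆ ((fun (x : ℤ → A) (i : ℤ) => x (i + (j : ℤ))) ⁻¹' S)ᶜ := by
        intro x hx hxS
        refine hw k hk x hx j hj ?_
        funext i
        have := hxS i
        simpa [add_comm] using this
      have h1 : μk k (((fun (x : ℤ → A) (i : ℤ) => x (i + (j : ℤ))) ⁻¹' S)ᶜ) = 1 := by
        refine le_antisymm prob_le_one ?_
        calc (1 : ℝ≥0∞) = μk k G := (hsupp k).symm
          _ ≤ _ := measure_mono hsub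
      exact (prob_compl_eq_one_iff ((hTmeas j) hSmeas)).mp h1
    -- sum bound
    have hsum : ∑ j ∈ Finset.range k, m j ≤ (N : ℝ≥0∞) := by
      calc ∑ j ∈ Finset.range k, m j
          ≤ ∑ j ∈ Finset.range k, (if j + N ≤ k then 0 else 1 : ℝ≥0∞) := by
            refine Finset.sum_le_sum fun j _ => ?_
            by_cases h : j + N ≤ k
            · simp [h, hzero j h]
            · simp only [h, if_false]
              exact prob_le_one
        _ = ((Finset.range k).filter fun j => ¬ (j + N ≤ k)).card • (1 : ℝ≥0∞) := by
            rw [Finset.sum_ite, Finset.sum_const_zero, zero_add, Finset.sum_const]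
        _ ≤ (N : ℝ≥0∞) := by
            rw [nsmul_eq_mul, mul_one]
            refine Nat.cast_le.mpr ?_
            calc ((Finset.range k).filter fun j => ¬ (j + N ≤ k)).card
                ≤ (Finset.Ico (k - N) k).card := by
                  refine Finset.card_le_card fun j hj => ?_
                  simp only [Finset.mem_filter, Finset.mem_range, not_le] at hj
                  refine Finset.mem_Ico.mpr ⟨?_, hj.1⟩
                  omega
              _ ≤ N := by rw [Nat.card_Ico]; omega
    calc νk k S = (k : ℝ≥0∞)⁻¹ * ∑ j ∈ Finset.range k, m j := happly
      _ ≤ (k : ℝ≥0∞)⁻¹ * N := mul_le_mul_right hsum _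
      _ = (N : ℝ≥0∞) / k := by rw [ENNReal.div_eq_inv_mul]
  refine ⟨key, ?_⟩
  have hlim0 : Tendsto (fun j : ℕ => (N : ℝ≥0∞) / (ks j : ℝ≥0∞)) atTop (𝓝 0) := by
    have h1 : Tendsto (fun j : ℕ => ((ks j : ℕ) : ℝ≥0∞)) atTop (𝓝 ⊤) :=
      ENNReal.tendsto_nat_nhds_top.comp hks
    have := ENNReal.Tendsto.const_div (a := (N : ℝ≥0∞)) h1 (Or.inr (by simp))
    simpa using this
  have hsq : Tendsto (fun j : ℕ => νk (ks j) S) atTop (𝓝 0) := by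
    refine tendsto_of_tendsto_of_tendsto_of_le_of_le' tendsto_const_nhds hlim0
      (Eventually.of_forall fun j => zero_le) ?_
    filter_upwards [hks.eventually_ge_atTop k₀] with j hj
    exact key (ks j) hj
  exact tendsto_nhds_unique hconv hsq
end

section
/- Let X be a subshift, Y ⊆ X a fixed subshift, and Z_ℓ ⊆ B_ℓ(X) a set of words of length ℓ such that any finite concatenation of words in Z_ℓ is a word of Y. Suppose there is a constant C such that for all u ∈ Z_ℓ the infimum Birkhoff sum satisfies ⨎S_ℓ f(u) ≥ S_ℓ f(u) − C, where S_ℓ f(u) denotes the supremum version. Then for every q ≥ 1, Λ_{qℓ}(Y) ≥ e^{-qC} (∑_{u ∈ Z_ℓ} e^{S_ℓ f(u)})^q, and hence P_Y(f) ≥ (1/ℓ) log ∑_{u ∈ Z_ℓ} e^{S_ℓ f(u)} − C/ℓ. -/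
open MeasureTheory Filter Topology
open scoped ENNReal

noncomputable section

variable {A : Type*}

section Stmt17Aux
variable {A : Type*}

lemma Birk_cont [TopologicalSpace A] (f : (ℤ → A) → ℝ) (hf : Continuous f) (m : ℕ) :
    Continuous (Birk f m) := by
  unfold Birk
  exact continuous_finset_sum _ fun j _ =>
    hf.comp (continuous_pi fun i => continuous_apply _)

lemma ssup_bdd [Fintype A] [TopologicalSpace A] [DiscreteTopology A]
    {Y : Set (ℤ → A)} (hYc : IsClosed Y) (f : (ℤ → A) → ℝ) (hf : Continuous f) (m : ℕ)
    (p : (ℤ → A) → Prop) :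
    BddAbove {r : ℝ | ∃ x ∈ Y, p x ∧ r = Birk f m x} := by
  have hcY : IsCompact Y := hYc.isCompact
  have hsub : {r : ℝ | ∃ x ∈ Y, p x ∧ r = Birk f m x} ⊆ Birk f m '' Y := by
    rintro r ⟨x, hx, -, rfl⟩; exact ⟨x, hx, rfl⟩
  exact ((hcY.image (Birk_cont f hf m)).bddAbove).mono hsub

lemma Birk_le_Ssup [Fintype A] [TopologicalSpace A] [DiscreteTopology A]
    {Y : Set (ℤ → A)} (hYc : IsClosed Y) (f : (ℤ → A) → ℝ) (hf : Continuous f) (m : ℕ)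
    {x : ℤ → A} (hx : x ∈ Y) :
    Birk f m x ≤ Ssup Y f m (fun j => x ((j : ℕ) : ℤ)) :=
  le_csSup (ssup_bdd hYc f hf m _) ⟨x, hx, fun _ => rfl, rfl⟩

lemma Birk_add (f : (ℤ → A) → ℝ) (m n : ℕ) (x : ℤ → A) :
    Birk f (m + n) x = Birk f m x + Birk f n (fun i => x (i + (m : ℤ))) := by
  unfold Birk
  rw [Finset.sum_range_add]
  congr 1
  refine Finset.sum_congr rfl fun j _ => ?_
  congr 1
  funext i
  congr 1
  push_cast
  ring

lemma Birk_mul (f : (ℤ → A) → ℝ) (ℓ q : ℕ) (x : ℤ → A) :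
    Birk f (q * ℓ) x = ∑ i ∈ Finset.range q, Birk f ℓ (fun t => x (t + ((i * ℓ : ℕ) : ℤ))) := by
  induction q with
  | zero => simp [Birk]
  | succ q ih =>
    rw [Nat.succ_mul, Birk_add, ih, Finset.sum_range_succ]

lemma shift_mem {Y : Set (ℤ → A)}
    (hY : (fun x : ℤ → A => fun i => x (i + 1)) '' Y = Y) (n : ℕ) {x : ℤ → A} (hx : x ∈ Y) :
    (fun i => x (i + (n : ℤ))) ∈ Y := by
  induction n with
  | zero => simpa using hx
  | succ n ih =>
    have h : (fun i => x (i + ((n + 1 : ℕ) : ℤ)))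
        = (fun z : ℤ → A => fun i => z (i + 1)) (fun i => x (i + (n : ℤ))) := by
      funext i; simp only; congr 1; push_cast; ring
    rw [h, ← hY]
    exact Set.mem_image_of_mem _ ih

end Stmt17Aux

/-- Let `Y ⊆ X` be subshifts, `f` continuous, and `Z ⊆ B_ℓ(Y)` a (nonempty) set
of freely concatenable words of length `ℓ`: any concatenation of words of `Z` is realized in a
point of `Y`.  Suppose the Birkhoff sums of `f` over each cylinder `[u] ∩ Y`, `u ∈ Z`, have
oscillation at most `C`, i.e. the inf Birkhoff sum is at least `S_ℓ f(u) − C`.  Then for every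
`q ≥ 1`, `Λ_{qℓ}(Y) ≥ e^{−qC} (∑_{u ∈ Z} e^{S_ℓ f(u)})^q`, and hence
`P_Y(f) ≥ (1/ℓ) log ∑_{u ∈ Z} e^{S_ℓ f(u)} − C/ℓ`. -/
theorem stmt17 [Fintype A] [TopologicalSpace A] [DiscreteTopology A]
    (X Y : Set (ℤ → A)) (hX : IsSubshift X) (hYsub : IsSubshift Y) (hYX : Y ⊆ X)
    (hYne : Y.Nonempty)
    (f : (ℤ → A) → ℝ) (hf : Continuous f)
    (ℓ : ℕ) (hℓ : 1 ≤ ℓ) (Z : Finset (Fin ℓ → A)) (hZne : Z.Nonempty)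
    (hZY : ∀ u ∈ Z, u ∈ Words Y ℓ)
    (hconcat : ∀ (q : ℕ) (c : Fin q → Fin ℓ → A), (∀ i, c i ∈ Z) →
      ∃ x ∈ Y, ∀ (i : Fin q) (t : Fin ℓ), x (((i : ℕ) * ℓ + (t : ℕ) : ℕ) : ℤ) = c i t)
    (C : ℝ) (hC : 0 ≤ C)
    (hosc : ∀ u ∈ Z, ∀ x ∈ Y, (∀ t : Fin ℓ, x ((t : ℕ) : ℤ) = u t) →
      Ssup Y f ℓ u - C ≤ Birk f ℓ x) :
    (∀ q : ℕ, 1 ≤ q →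
      Real.exp (-(q : ℝ) * C) * (∑ u ∈ Z, Real.exp (Ssup Y f ℓ u)) ^ q ≤ Lam Y f (q * ℓ)) ∧
    ∀ P : ℝ, Tendsto (fun m : ℕ => Real.log (Lam Y f m) / m) atTop (𝓝 P) →
      Real.log (∑ u ∈ Z, Real.exp (Ssup Y f ℓ u)) / ℓ - C / ℓ ≤ P := by
  classical
  have hYc := hYsub.1
  have hYshift := hYsub.2
  have main : ∀ q : ℕ, 1 ≤ q →
      Real.exp (-(q : ℝ) * C) * (∑ u ∈ Z, Real.exp (Ssup Y f ℓ u)) ^ q ≤ Lam Y f (q * ℓ) := by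
    intro q hq
    let xc : (Fin q → Fin ℓ → A) → (ℤ → A) := fun c =>
      if h : ∀ i, c i ∈ Z then (hconcat q c h).choose else hYne.choose
    have hxcY : ∀ c, (∀ i, c i ∈ Z) → xc c ∈ Y := by
      intro c h
      simp only [xc, dif_pos h]
      exact (hconcat q c h).choose_spec.1
    have hxcspec : ∀ c, (∀ i, c i ∈ Z) → ∀ (i : Fin q) (t : Fin ℓ),
        xc c (((i : ℕ) * ℓ + (t : ℕ) : ℕ) : ℤ) = c i t := by
      intro c h
      simp only [xc, dif_pos h]
      exact (hconcat q c h).choose_spec.2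
    have hidx : ∀ (i : Fin q) (t : Fin ℓ), (i : ℕ) * ℓ + (t : ℕ) < q * ℓ := by
      intro i t
      have h1 : (i : ℕ) * ℓ + (t : ℕ) < ((i : ℕ) + 1) * ℓ := by
        rw [Nat.add_mul, Nat.one_mul]
        exact Nat.add_lt_add_left t.isLt _
      exact lt_of_lt_of_le h1 (Nat.mul_le_mul_right ℓ i.isLt)
    let e : (Fin q → Fin ℓ → A) → (Fin (q * ℓ) → A) := fun c j => xc c ((j : ℕ) : ℤ)
    have key : ∀ c ∈ Fintype.piFinset (fun _ : Fin q => Z),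
        Real.exp (-(q : ℝ) * C) * ∏ i : Fin q, Real.exp (Ssup Y f ℓ (c i))
          ≤ Real.exp (Ssup Y f (q * ℓ) (e c)) := by
      intro c hc
      have h : ∀ i, c i ∈ Z := by simpa [Fintype.mem_piFinset] using hc
      have hxY := hxcY c h
      have hblock : ∀ i : Fin q, Ssup Y f ℓ (c i) - C
          ≤ Birk f ℓ (fun t => xc c (t + (((i : ℕ) * ℓ : ℕ) : ℤ))) := by
        intro i
        refine hosc (c i) (h i) _ (shift_mem hYshift _ hxY) ?_
        intro t
        show xc c (((t : ℕ) : ℤ) + (((i : ℕ) * ℓ : ℕ) : ℤ)) = c i t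
        have h2 : ((t : ℕ) : ℤ) + (((i : ℕ) * ℓ : ℕ) : ℤ)
            = (((i : ℕ) * ℓ + (t : ℕ) : ℕ) : ℤ) := by push_cast; ring
        rw [h2]
        exact hxcspec c h i t
      have hsum : (∑ i : Fin q, Ssup Y f ℓ (c i)) - q * C ≤ Birk f (q * ℓ) (xc c) := by
        rw [Birk_mul]
        have h3 : ∑ i : Fin q, (Ssup Y f ℓ (c i) - C)
            ≤ ∑ i ∈ Finset.range q, Birk f ℓ (fun t => xc c (t + ((i * ℓ : ℕ) : ℤ))) := by
          rw [← Fin.sum_univ_eq_sum_range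
            (fun i => Birk f ℓ (fun t => xc c (t + ((i * ℓ : ℕ) : ℤ)))) q]
          exact Finset.sum_le_sum fun i _ => hblock i
        calc (∑ i : Fin q, Ssup Y f ℓ (c i)) - q * C
            = ∑ i : Fin q, (Ssup Y f ℓ (c i) - C) := by
              rw [Finset.sum_sub_distrib]
              simp
          _ ≤ _ := h3
      have hSle : Birk f (q * ℓ) (xc c) ≤ Ssup Y f (q * ℓ) (e c) :=
        Birk_le_Ssup hYc f hf _ hxY
      rw [← Real.exp_sum, ← Real.exp_add, Real.exp_le_exp]
      have heq : -(q : ℝ) * C + ∑ i : Fin q, Ssup Y f ℓ (c i)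
          = (∑ i : Fin q, Ssup Y f ℓ (c i)) - q * C := by ring
      rw [heq]
      exact le_trans hsum hSle
    have hmem : ∀ c ∈ Fintype.piFinset (fun _ : Fin q => Z), e c ∈ Words Y (q * ℓ) := by
      intro c hc
      have h : ∀ i, c i ∈ Z := by simpa [Fintype.mem_piFinset] using hc
      simp only [Words, Finset.mem_filter, Finset.mem_univ, true_and]
      exact ⟨xc c, hxcY c h, fun j => rfl⟩
    have hinj : ∀ c ∈ Fintype.piFinset (fun _ : Fin q => Z),
        ∀ c' ∈ Fintype.piFinset (fun _ : Fin q => Z), e c = e c' → c = c' := by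
      intro c hc c' hc' hee
      have h : ∀ i, c i ∈ Z := by simpa [Fintype.mem_piFinset] using hc
      have h' : ∀ i, c' i ∈ Z := by simpa [Fintype.mem_piFinset] using hc'
      funext i t
      have hj := congrFun hee ⟨(i : ℕ) * ℓ + (t : ℕ), hidx i t⟩
      rw [← hxcspec c h i t, ← hxcspec c' h' i t]
      exact hj
    calc Real.exp (-(q : ℝ) * C) * (∑ u ∈ Z, Real.exp (Ssup Y f ℓ u)) ^ q
        = ∑ c ∈ Fintype.piFinset (fun _ : Fin q => Z),
            Real.exp (-(q : ℝ) * C) * ∏ i : Fin q, Real.exp (Ssup Y f ℓ (c i)) := by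
          rw [← Finset.mul_sum]
          congr 1
          calc (∑ u ∈ Z, Real.exp (Ssup Y f ℓ u)) ^ q
              = ∏ _i : Fin q, ∑ u ∈ Z, Real.exp (Ssup Y f ℓ u) := by
                simp [Finset.prod_const]
            _ = _ := Finset.prod_univ_sum _ _
      _ ≤ ∑ c ∈ Fintype.piFinset (fun _ : Fin q => Z),
            Real.exp (Ssup Y f (q * ℓ) (e c)) := Finset.sum_le_sum key
      _ = ∑ w ∈ Finset.image e (Fintype.piFinset (fun _ : Fin q => Z)),
            Real.exp (Ssup Y f (q * ℓ) w) := (Finset.sum_image (f := fun w => Real.exp (Ssup Y f (q * ℓ) w)) hinj).symm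
      _ ≤ Lam Y f (q * ℓ) := by
          refine Finset.sum_le_sum_of_subset_of_nonneg ?_ (fun _ _ _ => (Real.exp_pos _).le)
          intro w hw
          obtain ⟨c, hc, rfl⟩ := Finset.mem_image.1 hw
          exact hmem c hc
  refine ⟨main, ?_⟩
  intro P hP
  have hSig : 0 < ∑ u ∈ Z, Real.exp (Ssup Y f ℓ u) :=
    Finset.sum_pos (fun _ _ => Real.exp_pos _) hZne
  have hℓR : (0 : ℝ) < (ℓ : ℝ) := by exact_mod_cast Nat.lt_of_lt_of_le Nat.zero_lt_one hℓ
  have htend : Tendsto (fun q : ℕ => Real.log (Lam Y f (q * ℓ)) / ((q * ℓ : ℕ) : ℝ))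
      atTop (𝓝 P) := by
    exact hP.comp (tendsto_atTop_atTop.2 fun b =>
      ⟨b, fun a ha => le_trans ha (Nat.le_mul_of_pos_right a hℓ)⟩)
  refine ge_of_tendsto htend ?_
  filter_upwards [eventually_ge_atTop 1] with q hq
  have hL := main q hq
  have hqR : (0 : ℝ) < (q : ℝ) := by exact_mod_cast Nat.lt_of_lt_of_le Nat.zero_lt_one hq
  have hlog : -(q : ℝ) * C + (q : ℝ) * Real.log (∑ u ∈ Z, Real.exp (Ssup Y f ℓ u))
      ≤ Real.log (Lam Y f (q * ℓ)) := by
    have hlogle := Real.log_le_log (by positivity) hL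
    rwa [Real.log_mul (by positivity) (by positivity), Real.log_exp, Real.log_pow] at hlogle
  have heq : (-(q : ℝ) * C + (q : ℝ) * Real.log (∑ u ∈ Z, Real.exp (Ssup Y f ℓ u)))
        / ((q * ℓ : ℕ) : ℝ)
      = Real.log (∑ u ∈ Z, Real.exp (Ssup Y f ℓ u)) / (ℓ : ℝ) - C / (ℓ : ℝ) := by
    push_cast
    field_simp
    ring
  rw [← heq]
  have hd : (0 : ℝ) < ((q * ℓ : ℕ) : ℝ) := by
    push_cast
    positivity
  exact div_le_div_of_nonneg_right hlog hd.le


end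
end
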